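/- arXiv:1912.03774 — 11 statements merged into one kernel-verified Lean document; each statement's English description precedes it below -/
import Mathlib

section
/- Let $P$ be a set with a transitive round relation $\prec$ (i.e. $p^{\succ\succ}\subseteq p^\succ\neq\emptyset$ for all $p$). If $P$ is an abstract bi-pseudobasis (for all $p'\prec p$ and $q'\prec q$, $(p'^\succ\cap q'^\succ)\mathrel{\mathsf{C}}(p^\succ\cap q^\succ)$), then every tight subset of $P$ is a filter. -/
variable {P : Type*}

/-- `p^≻`: the set of elements strictly below `p`. -/
def dnSet (prec : P → P → Prop) (p : P) : Set P := {q | prec q p}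

/-- `Q^≻`: the set of elements below some element of `Q`. -/
def blwSet (prec : P → P → Prop) (Q : Set P) : Set P := {p | ∃ q ∈ Q, prec p q}

/-- `Q^≺`: the set of elements above some element of `Q`. -/
def abvSet (prec : P → P → Prop) (Q : Set P) : Set P := {p | ∃ q ∈ Q, prec q p}

/-- `Q ≺ R` as subsets: every element of `Q` is below some element of `R`. -/
def refines (prec : P → P → Prop) (Q R : Set P) : Prop := ∀ q ∈ Q, ∃ r ∈ R, prec q r

/-- Dense cover relation `Q D R`. -/
def dCov (prec : P → P → Prop) (Q R : Set P) : Prop :=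
  ∀ q ∈ blwSet prec Q, ∃ r ∈ blwSet prec R, prec r q

/-- Compact cover relation `Q C R`. -/
def cCov (prec : P → P → Prop) (Q R : Set P) : Prop :=
  ∃ F : Finset P, dCov prec Q ↑F ∧ refines prec ↑F R

/-- Formal meet `F^` of a set. -/
def hatMeet (prec : P → P → Prop) (F : Set P) : Set P := {p | ∀ q ∈ F, prec p q}

/-- The relation is round: `p^≻ ≠ ∅` for all `p`. -/
def isRound (prec : P → P → Prop) : Prop := ∀ p : P, ∃ q, prec q p

/-- `T` is tight: `T = T^≺` and `F^` does not compactly cover `P \ T` for finite `F ⊆ T`. -/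
def isTight (prec : P → P → Prop) (T : Set P) : Prop :=
  T = abvSet prec T ∧ ∀ F : Finset P, ↑F ⊆ T → ¬ cCov prec (hatMeet prec ↑F) Tᶜ

/-- `T` is a filter: `t,u ∈ T ↔ ∃ s ∈ T, s ≺ t,u`. -/
def isFilt (prec : P → P → Prop) (T : Set P) : Prop :=
  ∀ t u, (t ∈ T ∧ u ∈ T) ↔ ∃ s ∈ T, prec s t ∧ prec s u

/-- In a transitive round relation satisfying the bi-pseudobasis
condition, every tight subset is a filter. -/
theorem tight_isFilter_of_biPseudobasis (prec : P → P → Prop)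
    (htrans : Transitive prec) (hround : isRound prec)
    (hbi : ∀ p' p q' q : P, prec p' p → prec q' q →
      cCov prec (dnSet prec p' ∩ dnSet prec q') (dnSet prec p ∩ dnSet prec q)) :
    ∀ T : Set P, isTight prec T → isFilt prec T := by
  rintro T ⟨hT, htight⟩ t u
  constructor
  · rintro ⟨ht, hu⟩
    have ht' : t ∈ abvSet prec T := hT ▸ ht
    obtain ⟨t', ht'T, ht't⟩ := ht'
    have hu' : u ∈ abvSet prec T := hT ▸ hu
    obtain ⟨u', hu'T, hu'u⟩ := hu'
    obtain ⟨F, hd, hr⟩ := hbi t' t u' u ht't hu'u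
    by_contra hno
    push_neg at hno
    classical
    apply htight {t', u'} (by
      intro x hx
      simp only [Finset.coe_insert, Finset.coe_singleton, Set.mem_insert_iff,
        Set.mem_singleton_iff] at hx
      rcases hx with h | h <;> subst h <;> assumption)
    refine ⟨F, ?_, ?_⟩
    · have he : hatMeet prec ↑({t', u'} : Finset P)
          = dnSet prec t' ∩ dnSet prec u' := by
        ext p
        simp only [hatMeet, dnSet, Finset.coe_insert, Finset.coe_singleton,
          Set.mem_setOf_eq, Set.mem_inter_iff, Set.mem_insert_iff,
          Set.mem_singleton_iff]
        constructor
        · intro h; exact ⟨h t' (Or.inl rfl), h u' (Or.inr rfl)⟩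
        · rintro ⟨h1, h2⟩ q (rfl | rfl) <;> assumption
      rw [he]; exact hd
    · intro f hf
      obtain ⟨r, hr1, hfr⟩ := hr f hf
      obtain ⟨hrt, hru⟩ := hr1
      refine ⟨r, ?_, hfr⟩
      intro hrT
      exact hno r hrT hrt hru
  · rintro ⟨s, hs, hst, hsu⟩
    constructor
    · exact hT ▸ ⟨s, hs, hst⟩
    · exact hT ▸ ⟨s, hs, hsu⟩
end

section
/- Let $(P,\prec)$ be an abstract pseudobasis. If every tight subset of $P$ is a filter, then for all $Q,R,S\subseteq P$: $Q\mathrel{\mathsf{C}} R$ and $Q\mathrel{\mathsf{C}} S$ imply $Q\mathrel{\mathsf{C}}(R^\succ\cap S^\succ)$. -/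
variable {P : Type*}

section BSHelpers

variable {P : Type*}

lemma blwSet_mono (prec : P → P → Prop) {A B : Set P} (h : A ⊆ B) :
    blwSet prec A ⊆ blwSet prec B := fun _ ⟨q, hq, hpq⟩ => ⟨q, h hq, hpq⟩

lemma cCov_anti (prec : P → P → Prop) {A B X : Set P} (h : A ⊆ B)
    (hc : cCov prec B X) : cCov prec A X := by
  obtain ⟨F, hd, hr⟩ := hc
  exact ⟨F, fun q hq => hd q (blwSet_mono prec h hq), hr⟩

lemma finset_subset_chain (c : Set (Set P)) (hchain : IsChain (· ⊆ ·) c)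
    (hne : c.Nonempty) : ∀ D : Finset P, ↑D ⊆ ⋃₀ c → ∃ t ∈ c, ↑D ⊆ t := by
  classical
  intro D
  induction D using Finset.induction_on with
  | empty =>
    intro _
    obtain ⟨t, ht⟩ := hne
    exact ⟨t, ht, by simp⟩
  | @insert a D' ha ih =>
    intro hD
    have haU : a ∈ ⋃₀ c := hD (by simp)
    obtain ⟨ta, hta, hata⟩ := haU
    have hD' : (↑D' : Set P) ⊆ ⋃₀ c := by
      intro x hx
      exact hD (by simp [hx])
    obtain ⟨t', ht', hDt'⟩ := ih hD'
    rcases hchain.total hta ht' with hle | hle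
    · refine ⟨t', ht', ?_⟩
      intro x hx
      rcases (by simpa using hx : x = a ∨ x ∈ D') with rfl | hx'
      · exact hle hata
      · exact hDt' hx'
    · refine ⟨ta, hta, ?_⟩
      intro x hx
      rcases (by simpa using hx : x = a ∨ x ∈ D') with rfl | hx'
      · exact hata
      · exact hle (hDt' hx')

lemma bs_combo [DecidableEq P] (prec : P → P → Prop) (htrans : Transitive prec) (hround : isRound prec)
    (Q X : Set P) (m : Set P)
    (hm : ∀ D : Finset P, ↑D ⊆ m → ¬ cCov prec (blwSet prec Q ∩ hatMeet prec ↑D) X)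
    (Y W : Finset P) (hY : ↑Y ⊆ m)
    (hdense : ∀ z ∈ blwSet prec (blwSet prec Q ∩ hatMeet prec ↑Y),
      ∃ w ∈ blwSet prec (↑W : Set P), prec w z) :
    ∃ w ∈ W, ∀ D : Finset P, ↑D ⊆ m →
      ¬ cCov prec (blwSet prec Q ∩ hatMeet prec ↑(insert w D)) X := by
  classical
  by_contra hno
  push_neg at hno
  choose D hDm hCov using hno
  have hCov' : ∀ w (hw : w ∈ W), ∃ Hf : Finset P,
      dCov prec (blwSet prec Q ∩ hatMeet prec ↑(insert w (D w hw))) ↑Hf ∧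
      refines prec ↑Hf X := fun w hw => hCov w hw
  choose H hdc hrf using hCov'
  set G : Finset P := Y ∪ W.attach.biUnion (fun w => D w.1 w.2) with hGdef
  have hGm : ↑G ⊆ m := by
    intro x hx
    rcases (by simpa [hGdef] using hx :
        x ∈ Y ∨ ∃ w, ∃ hw : w ∈ W, x ∈ D w hw) with hx' | ⟨w, hw, hx'⟩
    · exact hY hx'
    · exact hDm w hw hx'
  apply hm G hGm
  refine ⟨W.attach.biUnion (fun w => H w.1 w.2), ?_, ?_⟩
  · rintro z ⟨v, ⟨hvQ, hvG⟩, hzv⟩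
    have hzY : z ∈ blwSet prec (blwSet prec Q ∩ hatMeet prec ↑Y) := by
      refine ⟨v, ⟨hvQ, fun q hq => hvG q ?_⟩, hzv⟩
      simp only [hGdef, Finset.coe_union, Set.mem_union]
      exact Or.inl hq
    obtain ⟨w₀, hw₀W, hw₀z⟩ := hdense z hzY
    obtain ⟨w, hwW, hw₀w⟩ := hw₀W
    have hwW' : w ∈ W := hwW
    have hw₀K : w₀ ∈ blwSet prec Q ∩ hatMeet prec ↑(insert w (D w hwW')) := by
      constructor
      · obtain ⟨u, huQ, hvu⟩ := hvQ
        exact ⟨u, huQ, htrans (htrans hw₀z hzv) hvu⟩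
      · intro d hd
        rcases (by simpa using hd : d = w ∨ d ∈ D w hwW') with rfl | hdD
        · exact hw₀w
        · have hdG : prec v d := by
            refine hvG d ?_
            simp only [hGdef, Finset.coe_union, Set.mem_union]
            refine Or.inr ?_
            simp only [Finset.coe_biUnion, Finset.mem_coe, Finset.mem_attach,
              Set.mem_iUnion, Set.iUnion_true]
            exact ⟨⟨w, hwW'⟩, hdD⟩
          exact htrans hw₀z (htrans hzv hdG)
    obtain ⟨w₁, hw₁⟩ := hround w₀
    obtain ⟨mm, hmmH, hmmw₁⟩ := hdc w hwW' w₁ ⟨w₀, hw₀K, hw₁⟩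
    refine ⟨mm, ?_, htrans hmmw₁ (htrans hw₁ hw₀z)⟩
    obtain ⟨hh, hhH, hmmhh⟩ := hmmH
    refine ⟨hh, ?_, hmmhh⟩
    simp only [Finset.coe_biUnion, Finset.mem_coe, Finset.mem_attach,
      Set.mem_iUnion, Set.iUnion_true]
    exact ⟨⟨w, hwW'⟩, hhH⟩
  · intro h hh
    rcases (by simpa using hh : ∃ w, ∃ hw : w ∈ W, h ∈ H w hw) with ⟨w, hw, hhH⟩
    exact hrf w hw h hhH

end BSHelpers
/-- In an abstract pseudobasis in which every tight subset is a
filter, `Q C R` and `Q C S` imply `Q C (R^≻ ∩ S^≻)`. -/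
theorem cCov_inter_of_tight_filter (prec : P → P → Prop)
    (htrans : Transitive prec) (hround : isRound prec)
    (hpseudo : ∀ p' p : P, prec p' p → cCov prec (dnSet prec p') (dnSet prec p))
    (htf : ∀ T : Set P, isTight prec T → isFilt prec T) :
    ∀ Q R S : Set P, cCov prec Q R → cCov prec Q S →
      cCov prec Q (blwSet prec R ∩ blwSet prec S) := by
  classical
  intro Q R S hQR hQS
  by_contra hcon
  obtain ⟨F, hQF, hFR⟩ := hQR
  obtain ⟨G, hQG, hGS⟩ := hQS
  set X : Set P := blwSet prec R ∩ blwSet prec S with hXdef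
  set Sfam : Set (Set P) :=
    {T' | ∀ D : Finset P, ↑D ⊆ T' → ¬ cCov prec (blwSet prec Q ∩ hatMeet prec ↑D) X}
    with hSfamdef
  have hQblw : ¬ cCov prec (blwSet prec Q) X := by
    rintro ⟨Hc, hdc, hrc⟩
    apply hcon
    refine ⟨Hc, ?_, hrc⟩
    intro z hz
    obtain ⟨z', hz'⟩ := hround z
    obtain ⟨mm, hmm, hmmz⟩ := hdc z' ⟨z, hz, hz'⟩
    exact ⟨mm, hmm, htrans hmmz hz'⟩
  have hSempty : (∅ : Set P) ∈ Sfam := by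
    intro D hD hcc
    have hsub : blwSet prec Q ⊆ blwSet prec Q ∩ hatMeet prec ↑D := by
      intro x hx
      exact ⟨hx, fun q hq => absurd (hD hq) (Set.notMem_empty q)⟩
    exact hQblw (cCov_anti prec hsub hcc)
  have hchainub : ∀ c ⊆ Sfam, IsChain (· ⊆ ·) c → c.Nonempty →
      ∃ ub ∈ Sfam, ∀ s ∈ c, s ⊆ ub := by
    intro c hcS hchain hne
    refine ⟨⋃₀ c, ?_, fun s hs => Set.subset_sUnion_of_mem hs⟩
    intro D hD
    obtain ⟨t, htc, hDt⟩ := finset_subset_chain c hchain hne D hD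
    exact hcS htc D hDt
  obtain ⟨m, -, hmmax⟩ := zorn_subset_nonempty Sfam hchainub ∅ hSempty
  have hmS : ∀ D : Finset P, ↑D ⊆ m →
      ¬ cCov prec (blwSet prec Q ∩ hatMeet prec ↑D) X := hmmax.1
  have hadd : ∀ cq : P, (∀ D : Finset P, ↑D ⊆ m →
      ¬ cCov prec (blwSet prec Q ∩ hatMeet prec ↑(insert cq D)) X) → cq ∈ m := by
    intro cq hcq
    have hmem : (m ∪ {cq}) ∈ Sfam := by
      intro D hD
      by_cases hc : cq ∈ D
      · have hsub : ↑(D.erase cq) ⊆ m := by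
          intro x hx
          have hx' : x ∈ D.erase cq := hx
          rcases hD (Finset.mem_coe.mpr (Finset.mem_of_mem_erase hx')) with hxm | hxc
          · exact hxm
          · exact absurd (by simpa using hxc) (Finset.ne_of_mem_erase hx')
        rw [← Finset.insert_erase hc]
        exact hcq _ hsub
      · refine hmS D ?_
        intro x hx
        rcases hD hx with hxm | hxc
        · exact hxm
        · exact absurd (by simpa using hxc) (by rintro rfl; exact hc hx)
    have hle := hmmax.2 hmem Set.subset_union_left
    exact hle (Set.mem_union_right _ rfl)
  set T : Set P := abvSet prec m with hTdef
  have hTup : abvSet prec T ⊆ T := by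
    rintro u ⟨t, ⟨y, hym, hyt⟩, htu⟩
    exact ⟨y, hym, htrans hyt htu⟩
  have hTround : T ⊆ abvSet prec T := by
    rintro q ⟨y, hym, hyq⟩
    obtain ⟨B, hB1, hB2⟩ := hpseudo y q hyq
    have hdense : ∀ z ∈ blwSet prec (blwSet prec Q ∩ hatMeet prec ↑({y} : Finset P)),
        ∃ w ∈ blwSet prec (↑B : Set P), prec w z := by
      rintro z ⟨v, ⟨hvQ, hvy⟩, hzv⟩
      have hvy' : prec v y := hvy y (by simp)
      exact hB1 z ⟨v, hvy', hzv⟩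
    have hYm : ↑({y} : Finset P) ⊆ m := by
      intro x hx
      rcases (by simpa using hx : x = y) with rfl
      exact hym
    obtain ⟨b, hbB, hbadd⟩ := bs_combo prec htrans hround Q X m hmS {y} B hYm hdense
    have hbm : b ∈ m := hadd b hbadd
    obtain ⟨x, hxq, hbx⟩ := hB2 b (Finset.mem_coe.mpr hbB)
    exact ⟨x, ⟨b, hbm, hbx⟩, hxq⟩
  have hTeq : T = abvSet prec T := Set.Subset.antisymm hTround hTup
  have hTtight : ∀ Ft : Finset P, ↑Ft ⊆ T → ¬ cCov prec (hatMeet prec ↑Ft) Tᶜ := by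
    intro Ft hFt hcc
    obtain ⟨E, hE1, hE2⟩ := hcc
    have hanch : ∀ f ∈ Ft, ∃ y ∈ m, prec y f := fun f hf => hFt (Finset.mem_coe.mpr hf)
    choose ya hyam hyaf using hanch
    set Y : Finset P := Ft.attach.image (fun f => ya f.1 f.2) with hYdef
    have hYm : ↑Y ⊆ m := by
      intro x hx
      rcases (by simpa [hYdef] using hx : ∃ f, ∃ hf : f ∈ Ft, ya f hf = x) with ⟨f, hf, rfl⟩
      exact hyam f hf
    have hdense : ∀ z ∈ blwSet prec (blwSet prec Q ∩ hatMeet prec ↑Y),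
        ∃ w ∈ blwSet prec (↑E : Set P), prec w z := by
      rintro z ⟨v, ⟨hvQ, hvY⟩, hzv⟩
      have hvF : v ∈ hatMeet prec ↑Ft := by
        intro f hf
        have hf' : f ∈ Ft := hf
        have hv : prec v (ya f hf') := by
          refine hvY _ ?_
          simp only [hYdef, Finset.coe_image, Set.mem_image, Finset.mem_coe,
            Finset.mem_attach]
          exact ⟨⟨f, hf'⟩, by simp⟩
        exact htrans hv (hyaf f hf')
      exact hE1 z ⟨v, hvF, hzv⟩
    obtain ⟨e, heE, headd⟩ := bs_combo prec htrans hround Q X m hmS Y E hYm hdense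
    have hem : e ∈ m := hadd e headd
    obtain ⟨ce, hce, hece⟩ := hE2 e (Finset.mem_coe.mpr heE)
    exact hce ⟨e, hem, hece⟩
  have hget : ∀ W : Finset P, dCov prec Q ↑W → ∃ w ∈ W, w ∈ m := by
    intro W hW
    have hdense : ∀ z ∈ blwSet prec (blwSet prec Q ∩ hatMeet prec ↑(∅ : Finset P)),
        ∃ w ∈ blwSet prec (↑W : Set P), prec w z := by
      rintro z ⟨v, ⟨hvQ, -⟩, hzv⟩
      obtain ⟨u, huQ, hvu⟩ := hvQ
      exact hW z ⟨u, huQ, htrans hzv hvu⟩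
    obtain ⟨w, hwW, hwadd⟩ := bs_combo prec htrans hround Q X m hmS ∅ W (by simp) hdense
    exact ⟨w, hwW, hadd w hwadd⟩
  obtain ⟨f, hfF, hfm⟩ := hget F hQF
  obtain ⟨g, hgG, hgm⟩ := hget G hQG
  obtain ⟨r, hrR, hfr⟩ := hFR f (Finset.mem_coe.mpr hfF)
  obtain ⟨s₀, hs₀S, hgs₀⟩ := hGS g (Finset.mem_coe.mpr hgG)
  have hrT : r ∈ T := ⟨f, hfm, hfr⟩
  have hs₀T : s₀ ∈ T := ⟨g, hgm, hgs₀⟩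
  obtain ⟨s, hsT, hsr, hss₀⟩ := (htf T ⟨hTeq, hTtight⟩ r s₀).mp ⟨hrT, hs₀T⟩
  have hsX : s ∈ X := ⟨⟨r, hrR, hsr⟩, ⟨s₀, hs₀S, hss₀⟩⟩
  obtain ⟨y, hym, hys⟩ := hsT
  have hYm : ↑({y} : Finset P) ⊆ m := by
    intro x hx
    rcases (by simpa using hx : x = y) with rfl
    exact hym
  apply hmS {y} hYm
  refine ⟨{y}, ?_, ?_⟩
  · rintro z ⟨v, ⟨hvQ, hvy⟩, hzv⟩
    obtain ⟨z', hz'⟩ := hround z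
    have hvy' : prec v y := hvy y (by simp)
    exact ⟨z', ⟨y, by simp, htrans (htrans hz' hzv) hvy'⟩, hz'⟩
  · intro hq hhq
    rcases (by simpa using hhq : hq = y) with rfl
    exact ⟨s, hsX, hys⟩
end

section
/- Let $(P,\prec)$ be an abstract bi-pseudobasis and $\emptyset\neq T\subseteq p^\succ$ for some $p\in P$. If $T$ is tight in the restricted structure $(p^\succ,\prec)$, then $T^\prec$ is tight in $P$. -/
variable {P : Type*}

/-- `Q^≻` computed inside the ambient set `X`. -/
def blwIn (prec : P → P → Prop) (X Q : Set P) : Set P := {p ∈ X | ∃ q ∈ Q, prec p q}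

/-- `Q^≺` computed inside the ambient set `X`. -/
def abvIn (prec : P → P → Prop) (X Q : Set P) : Set P := {p ∈ X | ∃ q ∈ Q, prec q p}

/-- Dense cover relation relativised to `X`. -/
def dCovIn (prec : P → P → Prop) (X Q R : Set P) : Prop :=
  ∀ q ∈ blwIn prec X Q, ∃ r ∈ blwIn prec X R, prec r q

/-- Compact cover relation relativised to `X`. -/
def cCovIn (prec : P → P → Prop) (X Q R : Set P) : Prop :=
  ∃ F : Finset P, ↑F ⊆ X ∧ dCovIn prec X Q ↑F ∧ refines prec ↑F R

/-- Formal meet relativised to `X`. -/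
def hatMeetIn (prec : P → P → Prop) (X F : Set P) : Set P := {p ∈ X | ∀ q ∈ F, prec p q}

/-- `T` is tight in the ambient set `X`. -/
def isTightIn (prec : P → P → Prop) (X T : Set P) : Prop :=
  T = abvIn prec X T ∧
    ∀ F : Finset P, ↑F ⊆ T → ¬ cCovIn prec X (hatMeetIn prec X ↑F) (X \ T)

/-- `T` is locally tight: `T ∩ t^≻` is tight in `t^≻` for all `t ∈ T`. -/
def locallyTight (prec : P → P → Prop) (T : Set P) : Prop :=
  ∀ t ∈ T, isTightIn prec (dnSet prec t) (T ∩ dnSet prec t)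

/-- `P` is an abstract local bi-pseudobasis (beyond transitivity and roundness). -/
def localBi (prec : P → P → Prop) : Prop :=
  ∀ p r s r' s' : P, dnSet prec r ⊆ dnSet prec p → dnSet prec s ⊆ dnSet prec p →
    prec r' r → prec s' s →
    cCov prec (dnSet prec r' ∩ dnSet prec s') (dnSet prec r ∩ dnSet prec s)

/-- In an abstract bi-pseudobasis, if `∅ ≠ T ⊆ p^≻` is tight in the
restricted structure `(p^≻, ≺)` then `T^≺` is tight in `P`. -/
theorem tight_of_tightIn (prec : P → P → Prop)
    (htrans : Transitive prec) (hround : isRound prec)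
    (hbi : ∀ p' p q' q : P, prec p' p → prec q' q →
      cCov prec (dnSet prec p' ∩ dnSet prec q') (dnSet prec p ∩ dnSet prec q))
    (p : P) (T : Set P) (hne : T.Nonempty) (hsub : T ⊆ dnSet prec p)
    (ht : isTightIn prec (dnSet prec p) T) :
    isTight prec (abvSet prec T) := by
  classical
  obtain ⟨q₀, hq₀⟩ := hne
  have hq₀p : prec q₀ p := hsub hq₀
  constructor
  · ext x
    constructor
    · rintro ⟨t, htT, htx⟩
      have ht' : t ∈ abvIn prec (dnSet prec p) T := ht.1 ▸ htT
      obtain ⟨-, s, hsT, hst⟩ := ht'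
      exact ⟨t, ⟨s, hsT, hst⟩, htx⟩
    · rintro ⟨y, ⟨t, htT, hty⟩, hyx⟩
      exact ⟨t, htT, htrans hty hyx⟩
  · intro F hF hC
    obtain ⟨G, hGcov, hGref⟩ := hC
    -- pick witnesses in T below each element of F
    have hpick : ∀ f ∈ F, ∃ t, t ∈ T ∧ prec t f := by
      intro f hf
      obtain ⟨t, htT, htf⟩ := hF hf
      exact ⟨t, htT, htf⟩
    choose tf htfT htf using hpick
    -- pick witnesses outside abvSet T above each element of G
    have hr : ∀ g ∈ G, ∃ r, r ∉ abvSet prec T ∧ prec g r := by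
      intro g hg
      obtain ⟨r, hrT, hgr⟩ := hGref g hg
      exact ⟨r, hrT, hgr⟩
    choose rg hrgT hrg using hr
    -- apply the bi-pseudobasis condition
    have hHg : ∀ g (hg : g ∈ G),
        cCov prec (dnSet prec q₀ ∩ dnSet prec g)
          (dnSet prec p ∩ dnSet prec (rg g hg)) :=
      fun g hg => hbi q₀ p g (rg g hg) hq₀p (hrg g hg)
    choose H hHd hHr using hHg
    set F' : Finset P := insert q₀ (F.attach.image (fun f => tf f.1 f.2)) with hF'def
    have hF'T : ↑F' ⊆ T := by
      intro x hx
      simp only [hF'def, Finset.coe_insert, Set.mem_insert_iff, Finset.coe_image,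
        Set.mem_image, Finset.mem_coe, Finset.mem_attach] at hx
      rcases hx with rfl | ⟨f, -, rfl⟩
      · exact hq₀
      · exact htfT _ _
    set G' : Finset P := G.attach.biUnion (fun g => H g.1 g.2) with hG'def
    refine ht.2 F' hF'T ⟨G', ?_, ?_, ?_⟩
    · -- G' ⊆ p^≻
      intro h hh
      simp only [hG'def, Finset.coe_biUnion, Set.mem_iUnion, Finset.mem_coe,
        Finset.mem_attach] at hh
      obtain ⟨g, -, hhH⟩ := hh
      obtain ⟨s, ⟨hsp, -⟩, hhs⟩ := hHr g.1 g.2 h hhH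
      exact htrans hhs hsp
    · -- dCovIn
      rintro q ⟨hqp, m, hm, hqm⟩
      obtain ⟨hmp, hmF'⟩ := hm
      have hmq₀ : prec m q₀ := hmF' q₀ (by simp [hF'def])
      have hmF : m ∈ hatMeet prec (↑F : Set P) := by
        intro f hf
        have htfF' : tf f hf ∈ F' := by
          simp only [hF'def, Finset.mem_insert, Finset.mem_image, Finset.mem_attach]
          exact Or.inr ⟨⟨f, hf⟩, trivial, rfl⟩
        exact htrans (hmF' _ htfF') (htf f hf)
      obtain ⟨rr, ⟨g, hgG, hrrg⟩, hrrq⟩ := hGcov q ⟨m, hmF, hqm⟩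
      obtain ⟨rr', hrr'⟩ := hround rr
      have hrrmem : rr ∈ dnSet prec q₀ ∩ dnSet prec g :=
        ⟨htrans hrrq (htrans hqm hmq₀), hrrg⟩
      obtain ⟨r', ⟨h, hhH, hr'h⟩, hr'rr'⟩ :=
        hHd g hgG rr' ⟨rr, hrrmem, hrr'⟩
      have hr'q : prec r' q := htrans hr'rr' (htrans hrr' hrrq)
      refine ⟨r', ⟨htrans hr'q hqp, h, ?_, hr'h⟩, hr'q⟩
      simp only [hG'def, Finset.mem_coe, Finset.mem_biUnion, Finset.mem_attach]
      exact ⟨⟨g, hgG⟩, trivial, hhH⟩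
    · -- refines G' (p^≻ \ T)
      intro h hh
      simp only [hG'def, Finset.coe_biUnion, Set.mem_iUnion, Finset.mem_coe,
        Finset.mem_attach] at hh
      obtain ⟨g, -, hhH⟩ := hh
      obtain ⟨s, ⟨hsp, hsr⟩, hhs⟩ := hHr g.1 g.2 h hhH
      refine ⟨s, ⟨hsp, fun hsT => hrgT g.1 g.2 ⟨s, hsT, hsr⟩⟩, hhs⟩
end

section
/- An abstract local bi-pseudobasis is the same as an abstract pseudobasis $(P,\prec)$ satisfying: whenever $r'\prec r\prec p$ and $s'\prec s\prec p$, one has $(r'^\succ\cap s'^\succ)\mathrel{\mathsf{C}}(r^\succ\cap s^\succ)$. That is, these two conditions on a transitive round relation $\prec$ are equivalent. -/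
variable {P : Type*}

/-- A transitive round relation is an abstract local bi-pseudobasis
iff it is an abstract pseudobasis satisfying the condition with `≺` in place of
the lower preorder `≼`. -/
theorem localBi_iff_pseudobasis_and (prec : P → P → Prop)
    (htrans : Transitive prec) (hround : isRound prec) :
    localBi prec ↔
      ((∀ p' p : P, prec p' p → cCov prec (dnSet prec p') (dnSet prec p)) ∧
       (∀ p r r' s s' : P, prec r' r → prec r p → prec s' s → prec s p →
         cCov prec (dnSet prec r' ∩ dnSet prec s') (dnSet prec r ∩ dnSet prec s))) := by
  classical
  constructor
  · intro h
    refine ⟨fun p' p hp => ?_, fun p r r' s s' hr'r hrp hs's hsp => ?_⟩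
    · have := h p p p p' p' (subset_refl _) (subset_refl _) hp hp
      simpa [Set.inter_self] using this
    · exact h p r s r' s' (fun x hx => htrans hx hrp) (fun x hx => htrans hx hsp) hr'r hs's
  · rintro ⟨h1, h2⟩ p r s r' s' hrp hsp hr'r hs's
    obtain ⟨F, hFd, hFr⟩ := h1 r' r hr'r
    obtain ⟨G, hGd, hGr⟩ := h1 s' s hs's
    have key : ∀ f ∈ F, ∀ g ∈ G, ∃ H : Finset P,
        dCov prec (dnSet prec f ∩ dnSet prec g) ↑H ∧
        refines prec ↑H (dnSet prec r ∩ dnSet prec s) := by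
      intro f hf g hg
      obtain ⟨a, har, hfa⟩ := hFr f hf
      obtain ⟨b, hbs, hgb⟩ := hGr g hg
      have hap : prec a p := hrp har
      have hbp : prec b p := hsp hbs
      obtain ⟨H, hHd, hHr⟩ := h2 p a f b g hfa hap hgb hbp
      refine ⟨H, hHd, fun q hq => ?_⟩
      obtain ⟨t, ⟨hta, htb⟩, hqt⟩ := hHr q hq
      exact ⟨t, ⟨htrans hta har, htrans htb hbs⟩, hqt⟩
    set Hfun : P → P → Finset P := fun f g =>
      if hfg : f ∈ F ∧ g ∈ G then (key f hfg.1 g hfg.2).choose else ∅ with hHfun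
    set total : Finset P := F.biUnion (fun f => G.biUnion (fun g => Hfun f g)) with htot
    have hspec : ∀ f ∈ F, ∀ g ∈ G,
        dCov prec (dnSet prec f ∩ dnSet prec g) ↑(Hfun f g) ∧
        refines prec ↑(Hfun f g) (dnSet prec r ∩ dnSet prec s) := by
      intro f hf g hg
      have := (key f hf g hg).choose_spec
      simpa [hHfun, dif_pos (And.intro hf hg)] using this
    refine ⟨total, ?_, ?_⟩
    · -- dCov
      rintro q ⟨t, ⟨htr', hts'⟩, hqt⟩
      have hqx : q ∈ blwSet prec (dnSet prec r') := ⟨t, htr', hqt⟩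
      obtain ⟨x, hxF, hxq⟩ := hFd q hqx
      obtain ⟨f, hf, hxf⟩ := hxF
      have hqs' : prec q s' := htrans hqt hts'
      have hxs : x ∈ blwSet prec (dnSet prec s') := ⟨q, hqs', hxq⟩
      obtain ⟨y, hyG, hyx⟩ := hGd x hxs
      obtain ⟨g, hg, hyg⟩ := hyG
      have hyf : prec y f := htrans hyx hxf
      obtain ⟨z, hzy⟩ := hround y
      have hz : z ∈ blwSet prec (dnSet prec f ∩ dnSet prec g) := ⟨y, ⟨hyf, hyg⟩, hzy⟩
      obtain ⟨w, hwH, hwz⟩ := (hspec f hf g hg).1 z hz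
      obtain ⟨u, hu, hwu⟩ := hwH
      refine ⟨w, ⟨u, ?_, hwu⟩, htrans hwz (htrans hzy (htrans hyx hxq))⟩
      simp only [htot, Finset.coe_biUnion, Set.mem_iUnion]
      exact ⟨f, hf, g, hg, hu⟩
    · -- refines
      intro q hq
      simp only [htot, Finset.coe_biUnion, Set.mem_iUnion] at hq
      obtain ⟨f, hf, g, hg, hq⟩ := hq
      exact (hspec f hf g hg).2 q hq
end

section
/- Let $(P,\leq)$ be a poset in which every bounded pair $p,q\leq r$ is either disjoint ($p^\geq\cap q^\geq=\emptyset$) or has an infimum $p\wedge q$ with $p^\geq\cap q^\geq=(p\wedge q)^\geq$ (a generalised local $\wedge$-semilattice). Then $(P,\leq)$ is an abstract local bi-pseudobasis. -/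
variable {P : Type*}

/-- A generalised local meet-semilattice (every bounded pair is
disjoint or has an infimum) is an abstract local bi-pseudobasis. -/
theorem localSemilattice_localBi {P : Type*} [PartialOrder P]
    (h : ∀ p q r : P, p ≤ r → q ≤ r →
      dnSet (· ≤ ·) p ∩ dnSet (· ≤ ·) q = ∅ ∨
        ∃ m : P, dnSet (· ≤ ·) p ∩ dnSet (· ≤ ·) q = dnSet (· ≤ ·) m) :
    ∀ p r s r' s' : P, r ≤ p → s ≤ p → r' ≤ r → s' ≤ s →
      cCov (· ≤ ·) (dnSet (· ≤ ·) r' ∩ dnSet (· ≤ ·) s')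
        (dnSet (· ≤ ·) r ∩ dnSet (· ≤ ·) s) := by
  intro p r s r' s' hrp hsp hr' hs'
  rcases h r' s' p (hr'.trans hrp) (hs'.trans hsp) with he | ⟨m, hm⟩
  · refine ⟨∅, ?_, ?_⟩
    · rintro q ⟨t, ht, -⟩
      rw [he] at ht; exact ht.elim
    · rintro q hq; simp at hq
  · have hmm : m ∈ dnSet (· ≤ ·) r' ∩ dnSet (· ≤ ·) s' := by
      rw [hm]; exact le_refl m
    refine ⟨{m}, ?_, ?_⟩
    · rintro q ⟨t, ht, hqt⟩
      rw [hm] at ht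
      exact ⟨q, ⟨m, by simp, hqt.trans ht⟩, le_refl q⟩
    · rintro q hq
      simp only [Finset.coe_singleton, Set.mem_singleton_iff] at hq
      exact ⟨m, ⟨hmm.1.trans hr', hmm.2.trans hs'⟩, hq.le⟩
end

section
/- Let $(P,\prec)$ be an abstract local bi-pseudobasis and $T$ a filter in $P$ containing $t$. Then $T\cap t^\succ$ is tight in $t^\succ$ if and only if $T$ is locally tight in $P$ (i.e. $T\cap s^\succ$ is tight in $s^\succ$ for every $s\in T$). -/
variable {P : Type*}

lemma filt_upset {prec : P → P → Prop} {T : Set P} (hT : isFilt prec T)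
    {q p : P} (hq : q ∈ T) (hqp : prec q p) : p ∈ T :=
  ((hT p p).mpr ⟨q, hq, hqp, hqp⟩).1

lemma filt_lb {prec : P → P → Prop} (htrans : Transitive prec) {T : Set P}
    (hT : isFilt prec T) {t : P} (ht : t ∈ T) :
    ∀ F : Finset P, ↑F ⊆ T → ∃ w ∈ T, ∀ f ∈ F, prec w f := by
  classical
  intro F
  induction F using Finset.induction_on with
  | empty => exact fun _ => ⟨t, ht, by simp⟩
  | @insert a F ha ih =>
    intro hsub
    have haT : a ∈ T := hsub (by simp)
    obtain ⟨w', hw'T, hw'⟩ := ih (fun x hx => hsub (by simp [hx]))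
    obtain ⟨w, hwT, hwa, hww'⟩ := (hT a w').mp ⟨haT, hw'T⟩
    refine ⟨w, hwT, fun f hf => ?_⟩
    rcases Finset.mem_insert.mp hf with rfl | hf
    · exact hwa
    · exact htrans hww' (hw' f hf)

lemma filt_abvIn {prec : P → P → Prop} {T : Set P} (hT : isFilt prec T)
    {s : P} (hs : s ∈ T) :
    T ∩ dnSet prec s = abvIn prec (dnSet prec s) (T ∩ dnSet prec s) := by
  ext p
  constructor
  · rintro ⟨hpT, hps⟩
    obtain ⟨q, hqT, hqp, hqs⟩ := (hT p s).mp ⟨hpT, hs⟩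
    exact ⟨hps, q, ⟨hqT, hqs⟩, hqp⟩
  · rintro ⟨hps, q, ⟨hqT, _⟩, hqp⟩
    exact ⟨filt_upset hT hqT hqp, hps⟩

/-- For a filter `T` containing `t` in an abstract local
bi-pseudobasis, `T ∩ t^≻` is tight in `t^≻` iff `T` is locally tight. -/
theorem tightIn_iff_locallyTight (prec : P → P → Prop)
    (htrans : Transitive prec) (hround : isRound prec) (hlbi : localBi prec)
    (T : Set P) (hT : isFilt prec T) (t : P) (ht : t ∈ T) :
    isTightIn prec (dnSet prec t) (T ∩ dnSet prec t) ↔ locallyTight prec T := by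
  classical
  constructor
  · rintro ⟨-, htight⟩ s hs
    refine ⟨filt_abvIn hT hs, ?_⟩
    rintro F hF ⟨G, hGX, hGd, hGr⟩
    -- a common lower bound `w` of `t`, `s` and all of `F`
    obtain ⟨w, hwT, hw⟩ := filt_lb htrans hT ht (insert t (insert s F))
      (by
        intro x hx
        simp only [Finset.coe_insert, Set.mem_insert_iff] at hx
        rcases hx with rfl | rfl | hx
        · exact ht
        · exact hs
        · exact (hF hx).1)
    have hwt : prec w t := hw t (by simp)
    have hws : prec w s := hw s (by simp)
    have hwf : ∀ f ∈ F, prec w f := fun f hf => hw f (by simp [hf])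
    obtain ⟨w', hw'T, hw'w, -⟩ := (hT w w).mp ⟨hwT, hwT⟩
    -- for each `g ∈ G`, a localBi cover refining into `t^≻ \ T`
    have key : ∀ g : P, ∃ Fg : Finset P, g ∈ G →
        dCov prec (dnSet prec g ∩ dnSet prec w') ↑Fg ∧
        refines prec ↑Fg (dnSet prec t \ (T ∩ dnSet prec t)) := by
      intro g
      by_cases hg : g ∈ G
      · obtain ⟨r, hrX, hgr⟩ := hGr g (by simpa using hg)
        have hrs : prec r s := hrX.1
        have hrT : r ∉ T := fun h => hrX.2 ⟨h, hrX.1⟩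
        obtain ⟨Fg, hFgd, hFgr⟩ := hlbi s r w g w'
          (fun x hx => htrans hx hrs) (fun x hx => htrans hx hws) hgr hw'w
        refine ⟨Fg, fun _ => ⟨hFgd, fun h hh => ?_⟩⟩
        obtain ⟨v, ⟨hvr, hvw⟩, hhv⟩ := hFgr h hh
        have hvt : prec v t := htrans hvw hwt
        have hvT : v ∉ T := fun hvT' => hrT (filt_upset hT hvT' hvr)
        exact ⟨v, ⟨hvt, fun hc => hvT hc.1⟩, hhv⟩
      · exact ⟨∅, fun hg' => absurd hg' hg⟩
    choose Fg hFg using key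
    set H : Finset P := G.biUnion Fg with hH
    -- every element of H is below t
    have hHmem : ∀ h ∈ H, ∃ v, prec v t ∧ v ∉ T ∩ dnSet prec t ∧ prec h v := by
      intro h hh
      obtain ⟨g, hg, hhg⟩ := Finset.mem_biUnion.mp hh
      obtain ⟨v, hv, hhv⟩ := (hFg g hg).2 h (by simpa using hhg)
      exact ⟨v, hv.1, hv.2, hhv⟩
    have hHt : ∀ h ∈ H, prec h t := by
      intro h hh
      obtain ⟨v, hvt, -, hhv⟩ := hHmem h hh
      exact htrans hhv hvt
    -- contradict tightness at t with F' = {w'}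
    refine htight {w'} ?_ ⟨H, ?_, ?_, ?_⟩
    · intro x hx
      simp only [Finset.coe_singleton, Set.mem_singleton_iff] at hx
      subst hx
      exact ⟨hw'T, htrans hw'w hwt⟩
    · intro h hh
      exact hHt h (by simpa using hh)
    · -- dCovIn
      rintro q ⟨hqt, p, hp, hqp⟩
      have hpw' : prec p w' := hp.2 w' (by simp)
      have hqw' : prec q w' := htrans hqp hpw'
      -- q lies below the hat meet of F inside s^≻
      have hqIn : q ∈ blwIn prec (dnSet prec s) (hatMeetIn prec (dnSet prec s) ↑F) := by
        refine ⟨htrans hqw' (htrans hw'w hws), w',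
          ⟨htrans hw'w hws, fun f hf => htrans hw'w (hwf f (by simpa using hf))⟩, hqw'⟩
      obtain ⟨r, ⟨hrs, g, hgG, hrg⟩, hrq⟩ := hGd q hqIn
      have hgG' : g ∈ G := by simpa using hgG
      have hrw' : prec r w' := htrans hrq hqw'
      obtain ⟨r'', hr''⟩ := hround r
      obtain ⟨u, ⟨h, hhFg, huh⟩, hur⟩ :=
        (hFg g hgG').1 r'' ⟨r, ⟨hrg, hrw'⟩, hr''⟩
      have hhH : h ∈ H := Finset.mem_biUnion.mpr ⟨g, hgG', by simpa using hhFg⟩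
      refine ⟨u, ⟨htrans huh (hHt h hhH), h, by simpa using hhH, huh⟩,
        htrans (htrans hur hr'') hrq⟩
    · -- refines
      intro h hh
      obtain ⟨v, hvt, hvT, hhv⟩ := hHmem h (by simpa using hh)
      exact ⟨v, ⟨hvt, hvT⟩, hhv⟩
  · intro h
    exact h t ht
end

section
/- Let $(P,\prec)$ be an abstract local bi-pseudobasis and let $\mathcal{L}(P)$ be its locally tight spectrum with the topology generated by sets $O^p_R=\{T\in\mathcal{L}(P):p\in T,\ R\mathrel{\mathsf{C}} p^\succ\setminus T\}$ for $R\mathrel{\mathsf{C}} p$. Then the ultrafilters (maximal filters) form a dense subset of $\mathcal{L}(P)$. -/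
variable {P : Type*}

/-- The locally tight spectrum: non-empty locally tight filters. -/
def LSpec (prec : P → P → Prop) : Type _ :=
  {T : Set P // T.Nonempty ∧ isFilt prec T ∧ locallyTight prec T}

/-- The basic open set `O^p_R` of the locally tight spectrum. -/
def Obasic (prec : P → P → Prop) (p : P) (R : Set P) : Set (LSpec prec) :=
  {T | p ∈ T.1 ∧ cCov prec R (dnSet prec p \ T.1)}

/-- The topology on the locally tight spectrum, generated by the `O^p_R` for `R C p`. -/
instance instLSpecTop (prec : P → P → Prop) : TopologicalSpace (LSpec prec) :=
  TopologicalSpace.generateFrom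
    {O | ∃ (p : P) (R : Set P), cCov prec R {p} ∧ O = Obasic prec p R}


section AuxProofs

variable {prec : P → P → Prop}

private lemma dn_sub (htrans : Transitive prec) {a b : P} (h : prec a b) :
    dnSet prec a ⊆ dnSet prec b := fun _ hz => htrans hz h

private lemma filt_up {U : Set P} (hU : isFilt prec U) {u v : P} (hu : u ∈ U) (h : prec u v) :
    v ∈ U := ((hU v v).mpr ⟨u, hu, h, h⟩).1

private lemma filt_round {U : Set P} (hU : isFilt prec U) {u : P} (hu : u ∈ U) :
    ∃ s ∈ U, prec s u := by
  obtain ⟨s, hs, h1, -⟩ := (hU u u).mp ⟨hu, hu⟩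
  exact ⟨s, hs, h1⟩

private lemma filt_dir (htrans : Transitive prec) {U : Set P} (hU : isFilt prec U)
    (hne : U.Nonempty) (S : Finset P) (hS : ↑S ⊆ U) :
    ∃ u ∈ U, ∀ s ∈ S, prec u s := by
  classical
  induction S using Finset.induction_on with
  | empty =>
    obtain ⟨u, hu⟩ := hne
    exact ⟨u, hu, by simp⟩
  | @insert a S₀ ha ih =>
    obtain ⟨u₀, hu₀, h₀⟩ := ih (fun y hy => hS (by exact_mod_cast Finset.mem_insert_of_mem hy))
    obtain ⟨s, hsU, hsu₀, hsa⟩ := (hU u₀ a).mp ⟨hu₀, hS (by exact_mod_cast Finset.mem_insert_self a S₀)⟩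
    refine ⟨s, hsU, fun y hy => ?_⟩
    rcases Finset.mem_insert.mp hy with rfl | hy'
    · exact hsa
    · exact htrans hsu₀ (h₀ y hy')

private lemma chain_finset_mem {c : Set (Set P)} (hchain : IsChain (· ⊆ ·) c)
    (hcne : c.Nonempty) (S : Finset P) (hS : ↑S ⊆ ⋃₀ c) : ∃ A ∈ c, ↑S ⊆ A := by
  classical
  induction S using Finset.induction_on with
  | empty =>
    obtain ⟨A, hA⟩ := hcne
    exact ⟨A, hA, by simp⟩
  | @insert a S₀ ha ih =>
    obtain ⟨A₀, hA₀, hSA₀⟩ := ih (fun y hy => hS (by exact_mod_cast Finset.mem_insert_of_mem hy))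
    obtain ⟨A₁, hA₁, haA₁⟩ := hS (by exact_mod_cast Finset.mem_insert_self a S₀)
    rcases eq_or_ne A₀ A₁ with rfl | hne'
    · exact ⟨A₀, hA₀, by
        intro y hy
        rcases Finset.mem_insert.mp (by exact_mod_cast hy) with rfl | hy'
        · exact haA₁
        · exact hSA₀ hy'⟩
    · rcases hchain hA₀ hA₁ hne' with h | h
      · exact ⟨A₁, hA₁, by
          intro y hy
          rcases Finset.mem_insert.mp (by exact_mod_cast hy) with rfl | hy'
          · exact haA₁
          · exact h (hSA₀ hy')⟩
      · exact ⟨A₀, hA₀, by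
          intro y hy
          rcases Finset.mem_insert.mp (by exact_mod_cast hy) with rfl | hy'
          · exact h haA₁
          · exact hSA₀ hy'⟩

private lemma exists_filter_mem (htrans : Transitive prec) (hround : isRound prec) (q : P) :
    ∃ U₀ : Set P, isFilt prec U₀ ∧ q ∈ U₀ := by
  classical
  let f : ℕ → P := fun n => Nat.rec q (fun _ x => Classical.choose (hround x)) n
  have hf : ∀ n, prec (f (n + 1)) (f n) := fun n => Classical.choose_spec (hround (f n))
  have hle : ∀ a b, a ≤ b → prec (f (b + 1)) (f a) := by
    intro a b h
    induction b with
    | zero =>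
      have : a = 0 := Nat.le_zero.mp h
      subst this; exact hf 0
    | succ b ih =>
      rcases Nat.lt_or_ge a (b + 1) with h' | h'
      · exact htrans (hf (b + 1)) (ih (Nat.lt_succ_iff.mp h'))
      · have : a = b + 1 := le_antisymm h h'
        subst this; exact hf (b + 1)
  refine ⟨{v | ∃ n, prec (f n) v}, ?_, ⟨1, hf 0⟩⟩
  intro v₁ v₂
  constructor
  · rintro ⟨⟨n, hn⟩, ⟨m, hm⟩⟩
    refine ⟨f (max n m + 1), ⟨max n m + 2, hf (max n m + 1)⟩, ?_, ?_⟩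
    · exact htrans (hle n (max n m) (le_max_left n m)) hn
    · exact htrans (hle m (max n m) (le_max_right n m)) hm
  · rintro ⟨s, ⟨n, hn⟩, h1, h2⟩
    exact ⟨⟨n, htrans hn h1⟩, ⟨n, htrans hn h2⟩⟩

private lemma exists_max_filter (htrans : Transitive prec) {U₀ : Set P} (h₀ : isFilt prec U₀) :
    ∃ M : Set P, isFilt prec M ∧ U₀ ⊆ M ∧ ∀ V, isFilt prec V → M ⊆ V → V = M := by
  classical
  have hchaincond : ∀ c ⊆ {V | isFilt prec V ∧ U₀ ⊆ V}, IsChain (· ⊆ ·) c → c.Nonempty →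
      ∃ ub ∈ {V | isFilt prec V ∧ U₀ ⊆ V}, ∀ s ∈ c, s ⊆ ub := by
    intro c hc hchain hcne
    refine ⟨⋃₀ c, ⟨?_, ?_⟩, fun s hs => Set.subset_sUnion_of_mem hs⟩
    · intro v₁ v₂
      constructor
      · rintro ⟨⟨A₁, hA₁, hv₁⟩, ⟨A₂, hA₂, hv₂⟩⟩
        rcases eq_or_ne A₁ A₂ with rfl | hne'
        · obtain ⟨s, hs, h1, h2⟩ := ((hc hA₁).1 v₁ v₂).mp ⟨hv₁, hv₂⟩
          exact ⟨s, ⟨A₁, hA₁, hs⟩, h1, h2⟩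
        · rcases hchain hA₁ hA₂ hne' with h | h
          · obtain ⟨s, hs, h1, h2⟩ := ((hc hA₂).1 v₁ v₂).mp ⟨h hv₁, hv₂⟩
            exact ⟨s, ⟨A₂, hA₂, hs⟩, h1, h2⟩
          · obtain ⟨s, hs, h1, h2⟩ := ((hc hA₁).1 v₁ v₂).mp ⟨hv₁, h hv₂⟩
            exact ⟨s, ⟨A₁, hA₁, hs⟩, h1, h2⟩
      · rintro ⟨s, ⟨A, hA, hs⟩, h1, h2⟩
        obtain ⟨hm1, hm2⟩ := ((hc hA).1 v₁ v₂).mpr ⟨s, hs, h1, h2⟩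
        exact ⟨⟨A, hA, hm1⟩, ⟨A, hA, hm2⟩⟩
    · obtain ⟨A, hA⟩ := hcne
      exact (hc hA).2.trans (Set.subset_sUnion_of_mem hA)
  obtain ⟨M, hM₀, hMmax⟩ := zorn_subset_nonempty _ hchaincond U₀ ⟨h₀, subset_rfl⟩
  refine ⟨M, hMmax.prop.1, hM₀, fun V hV hMV => ?_⟩
  exact Set.Subset.antisymm (hMmax.2 ⟨hV, hM₀.trans hMV⟩ hMV) hMV

/-- The key absorption lemma: a maximal filter contains every element `x` lying
strictly above some `g` (all below `t ∈ U`) which is compatible with all of `U`. -/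
private lemma comp_mem (htrans : Transitive prec) (hround : isRound prec) (hlbi : localBi prec)
    {U : Set P} (hU : isFilt prec U)
    (hmax : ∀ V, isFilt prec V → U ⊆ V → V = U)
    {t g x : P} (ht : t ∈ U) (hgt : prec g t) (hxt : prec x t) (hgx : prec g x)
    (hcomp : ∀ w ∈ U, ∃ z, prec z g ∧ prec z w) : x ∈ U := by
  classical
  have hne : U.Nonempty := ⟨t, ht⟩
  set Col : Set (Set P) := {A | A ⊆ dnSet prec t ∧
      ∀ S : Finset P, ↑S ⊆ A → ∀ w ∈ U, ∃ e, (∀ s ∈ S, prec e s) ∧ prec e w} with hColdef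
  have hbase : ((U ∩ dnSet prec t) ∪ {g}) ∈ Col := by
    constructor
    · rintro y (⟨-, hy⟩ | hy)
      · exact hy
      · exact (Set.mem_singleton_iff.mp hy) ▸ hgt
    · intro S hS w hw
      have hsubU : ↑(insert w (S.erase g)) ⊆ U := by
        intro y hy
        rcases Finset.mem_insert.mp (by exact_mod_cast hy) with rfl | hy'
        · exact hw
        · rcases hS (Finset.mem_of_mem_erase hy') with h | h
          · exact h.1
          · exact absurd (Set.mem_singleton_iff.mp h) (Finset.ne_of_mem_erase hy')
      obtain ⟨u₁, hu₁U, hu₁⟩ := filt_dir htrans hU hne _ hsubU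
      obtain ⟨u₂, hu₂U, hu₂⟩ := filt_round hU hu₁U
      obtain ⟨z, hzg, hzu₂⟩ := hcomp u₂ hu₂U
      refine ⟨z, ?_, htrans (htrans hzu₂ hu₂) (hu₁ w (Finset.mem_insert_self _ _))⟩
      intro s hs
      by_cases hsg : s = g
      · exact hsg ▸ hzg
      · exact htrans (htrans hzu₂ hu₂)
          (hu₁ s (Finset.mem_insert_of_mem (Finset.mem_erase.mpr ⟨hsg, hs⟩)))
  have hchaincond : ∀ c ⊆ Col, IsChain (· ⊆ ·) c → c.Nonempty →
      ∃ ub ∈ Col, ∀ s ∈ c, s ⊆ ub := by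
    intro c hc hchain hcne
    refine ⟨⋃₀ c, ⟨?_, ?_⟩, fun s hs => Set.subset_sUnion_of_mem hs⟩
    · rintro y ⟨A, hA, hyA⟩
      exact (hc hA).1 hyA
    · intro S hS w hw
      obtain ⟨A, hAc, hSA⟩ := chain_finset_mem hchain hcne S hS
      exact (hc hAc).2 S hSA w hw
  obtain ⟨𝒮, hbase𝒮, h𝒮max⟩ := zorn_subset_nonempty Col hchaincond _ hbase
  obtain ⟨h𝒮sub, h𝒮cond⟩ := h𝒮max.prop
  have hg𝒮 : g ∈ 𝒮 := hbase𝒮 (Or.inr rfl)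
  -- the candidate filter
  set V : Set P := {v | ∃ f ∈ 𝒮, ∃ c, prec f c ∧ prec c t ∧ (c = v ∨ prec c v)} with hVdef
  have hVfilt : isFilt prec V := by
    intro v₁ v₂
    constructor
    · rintro ⟨⟨f₁, hf₁𝒮, c₁, hf₁c₁, hc₁t, hc₁v₁⟩, ⟨f₂, hf₂𝒮, c₂, hf₂c₂, hc₂t, hc₂v₂⟩⟩
      obtain ⟨K, hdK, hrK⟩ := hlbi t c₁ c₂ f₁ f₂ (dn_sub htrans hc₁t) (dn_sub htrans hc₂t)
        hf₁c₁ hf₂c₂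
      -- positive step
      have pos : ∀ S : Finset P, ↑S ⊆ 𝒮 → ∀ w ∈ U, ∃ b, ∃ k ∈ K, prec b k ∧
          (∀ s ∈ S, prec b s) ∧ prec b w := by
        intro S hS w hw
        have hins : ↑(insert f₁ (insert f₂ S)) ⊆ 𝒮 := by
          intro y hy
          rcases Finset.mem_insert.mp (by exact_mod_cast hy) with rfl | hy'
          · exact hf₁𝒮
          · rcases Finset.mem_insert.mp hy' with rfl | hy''
            · exact hf₂𝒮
            · exact hS hy''
        obtain ⟨e, he, hew⟩ := h𝒮cond _ hins w hw
        obtain ⟨e', he'⟩ := hround e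
        have hemem : e' ∈ blwSet prec (dnSet prec f₁ ∩ dnSet prec f₂) :=
          ⟨e, ⟨he f₁ (Finset.mem_insert_self _ _),
            he f₂ (Finset.mem_insert_of_mem (Finset.mem_insert_self _ _))⟩, he'⟩
        obtain ⟨b, ⟨k, hkK, hbk⟩, hbe'⟩ := hdK e' hemem
        refine ⟨b, k, hkK, hbk, fun s hs => ?_, htrans (htrans hbe' he') hew⟩
        exact htrans (htrans hbe' he')
          (he s (Finset.mem_insert_of_mem (Finset.mem_insert_of_mem hs)))
      -- pigeonhole to find a single k good for all (S, w)
      have hKstar : ∃ k ∈ K, ∀ S : Finset P, ↑S ⊆ 𝒮 → ∀ w ∈ U, ∃ b, prec b k ∧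
          (∀ s ∈ S, prec b s) ∧ prec b w := by
        by_contra hno
        push_neg at hno
        -- combine the failures over the finite set K
        have PH2 : ∀ K₀ : Finset P, (↑K₀ ⊆ (↑K : Set P)) → ∃ S' : Finset P, ∃ w' ∈ U,
            ↑S' ⊆ 𝒮 ∧ ∀ k ∈ K₀, ∀ b, prec b k → (∀ s ∈ S', prec b s) → ¬ prec b w' := by
          intro K₀
          induction K₀ using Finset.induction_on with
          | empty => exact fun _ => ⟨∅, t, ht, by simp, by simp⟩
          | @insert k₀ K₁ hk₀ ih =>
            intro hK₀
            obtain ⟨S₀, w₀, hw₀U, hS₀, hcomb₀⟩ :=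
              ih (fun y hy => hK₀ (by exact_mod_cast Finset.mem_insert_of_mem hy))
            obtain ⟨S₁, hS₁sub, w₁, hw₁U, hfail⟩ :=
              hno k₀ (by exact_mod_cast hK₀ (by exact_mod_cast Finset.mem_insert_self k₀ K₁))
            obtain ⟨w', hw'U, hw'⟩ := filt_dir htrans hU hne {w₀, w₁} (by
              intro y hy
              rcases Finset.mem_insert.mp (by exact_mod_cast hy) with rfl | hy'
              · exact hw₀U
              · exact (Finset.mem_singleton.mp hy') ▸ hw₁U)
            refine ⟨S₀ ∪ S₁, w', hw'U, ?_, ?_⟩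
            · intro y hy
              rcases Finset.mem_union.mp (by exact_mod_cast hy) with h | h
              · exact hS₀ h
              · exact hS₁sub h
            · intro k hk b hbk hbS hbw'
              rcases Finset.mem_insert.mp hk with rfl | hk'
              · exact hfail b hbk (fun s hs => hbS s (Finset.mem_union_right _ hs))
                  (htrans hbw' (hw' w₁ (by simp)))
              · exact hcomb₀ k hk' b hbk (fun s hs => hbS s (Finset.mem_union_left _ hs))
                  (htrans hbw' (hw' w₀ (by simp)))
        obtain ⟨S', w', hw'U, hS'sub, hcomb⟩ := PH2 K subset_rfl
        obtain ⟨b, k, hkK, hbk, hbS, hbw⟩ := pos S' hS'sub w' hw'U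
        exact hcomb k hkK b hbk hbS hbw
      obtain ⟨k, hkK, hkstar⟩ := hKstar
      obtain ⟨cst, hcst, hkcst⟩ := hrK k hkK
      have hcstt : prec cst t := htrans hcst.1 hc₁t
      -- k belongs to the maximal centred set
      have hk𝒮 : k ∈ 𝒮 := by
        have hinsCol : insert k 𝒮 ∈ Col := by
          constructor
          · rintro y (rfl | hy)
            · exact htrans hkcst hcstt
            · exact h𝒮sub hy
          · intro S hS w hw
            obtain ⟨b, hbk, hbS', hbw⟩ := hkstar (S.erase k) (by
              intro y hy
              have hyS := Finset.mem_of_mem_erase hy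
              rcases hS hyS with h | h
              · exact absurd h (Finset.ne_of_mem_erase hy)
              · exact h) w hw
            refine ⟨b, fun s hs => ?_, hbw⟩
            by_cases hsk : s = k
            · exact hsk ▸ hbk
            · exact hbS' s (Finset.mem_erase.mpr ⟨hsk, hs⟩)
        have := h𝒮max.2 hinsCol (Set.subset_insert k 𝒮)
        exact this (Set.mem_insert k 𝒮)
      refine ⟨cst, ⟨k, hk𝒮, cst, hkcst, hcstt, Or.inl rfl⟩, ?_, ?_⟩
      · rcases hc₁v₁ with rfl | h
        · exact hcst.1
        · exact htrans hcst.1 h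
      · rcases hc₂v₂ with rfl | h
        · exact hcst.2
        · exact htrans hcst.2 h
    · rintro ⟨s, ⟨f, hf𝒮, c, hfc, hct, hcs⟩, h1, h2⟩
      have hc1 : prec c v₁ := by rcases hcs with rfl | h; exacts [h1, htrans h h1]
      have hc2 : prec c v₂ := by rcases hcs with rfl | h; exacts [h2, htrans h h2]
      exact ⟨⟨f, hf𝒮, c, hfc, hct, Or.inr hc1⟩, ⟨f, hf𝒮, c, hfc, hct, Or.inr hc2⟩⟩
  have hUV : U ⊆ V := by
    intro u hu
    obtain ⟨u', hu'U, hu'⟩ := filt_dir htrans hU hne {u, t} (by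
      intro y hy
      rcases Finset.mem_insert.mp (by exact_mod_cast hy) with rfl | hy'
      · exact hu
      · exact (Finset.mem_singleton.mp hy') ▸ ht)
    obtain ⟨u'', hu''U, hu''⟩ := filt_round hU hu'U
    have hu't : prec u' t := hu' t (by simp)
    refine ⟨u'', hbase𝒮 (Or.inl ⟨hu''U, htrans hu'' hu't⟩), u', hu'', hu't,
      Or.inr (hu' u (by simp))⟩
  have hxV : x ∈ V := ⟨g, hg𝒮, x, hgx, hxt, Or.inl rfl⟩
  have := hmax V hVfilt hUV
  exact this ▸ hxV

private lemma max_locallyTight (htrans : Transitive prec) (hround : isRound prec)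
    (hlbi : localBi prec) {M : Set P} (hMfilt : isFilt prec M) (hne : M.Nonempty)
    (hmax : ∀ V, isFilt prec V → M ⊆ V → V = M) : locallyTight prec M := by
  classical
  intro t ht
  constructor
  · apply Set.eq_of_subset_of_subset
    · rintro pp ⟨hpM, hpt⟩
      obtain ⟨u, huM, hu⟩ := filt_dir htrans hMfilt hne {pp, t} (by
        intro y hy
        rcases Finset.mem_insert.mp (by exact_mod_cast hy) with rfl | hy'
        · exact hpM
        · exact (Finset.mem_singleton.mp hy') ▸ ht)
      exact ⟨hpt, u, ⟨huM, hu t (by simp)⟩, hu pp (by simp)⟩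
    · rintro pp ⟨hpt, u, ⟨huM, hut⟩, hupp⟩
      exact ⟨filt_up hMfilt huM hupp, hpt⟩
  · intro F hF hcc
    obtain ⟨G, hGsub, hdC, hrC⟩ := hcc
    obtain ⟨m, hmM, hm⟩ := filt_dir htrans hMfilt hne (insert t F) (by
      intro y hy
      rcases Finset.mem_insert.mp (by exact_mod_cast hy) with rfl | hy'
      · exact ht
      · exact (hF hy').1)
    obtain ⟨m₁, hm₁M, hm₁m⟩ := filt_round hMfilt hmM
    have hm₁t : prec m₁ t := htrans hm₁m (hm t (Finset.mem_insert_self _ _))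
    -- every element of M has a common refinement with something below G
    have step : ∀ w ∈ M, ∃ r, (∃ γ ∈ G, prec r γ) ∧ prec r w := by
      intro w hw
      obtain ⟨u, huM, hu⟩ := filt_dir htrans hMfilt hne {w, m₁} (by
        intro y hy
        rcases Finset.mem_insert.mp (by exact_mod_cast hy) with rfl | hy'
        · exact hw
        · exact (Finset.mem_singleton.mp hy') ▸ hm₁M)
      have hum₁ : prec u m₁ := hu m₁ (by simp)
      have huX : u ∈ blwIn prec (dnSet prec t) (hatMeetIn prec (dnSet prec t) ↑F) := by
        refine ⟨htrans hum₁ hm₁t, m₁, ⟨hm₁t, fun f hf => ?_⟩, hum₁⟩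
        exact htrans hm₁m (hm f (Finset.mem_insert_of_mem hf))
      obtain ⟨r, ⟨hrX, γ, hγG, hrγ⟩, hru⟩ := hdC u huX
      exact ⟨r, ⟨γ, hγG, hrγ⟩, htrans hru (hu w (by simp))⟩
    -- pigeonhole: one γ ∈ G compatible with all of M
    have hγstar : ∃ γ ∈ G, ∀ w ∈ M, ∃ z, prec z γ ∧ prec z w := by
      by_contra hno
      push_neg at hno
      have PH1 : ∀ G₀ : Finset P, (↑G₀ ⊆ (↑G : Set P)) → ∃ w' ∈ M,
          ∀ γ ∈ G₀, ∀ z, prec z γ → ¬ prec z w' := by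
        intro G₀
        induction G₀ using Finset.induction_on with
        | empty => exact fun _ => ⟨t, ht, by simp⟩
        | @insert γ₀ G₁ hγ₀ ih =>
          intro hG₀
          obtain ⟨w₀, hw₀M, hcomb₀⟩ :=
            ih (fun y hy => hG₀ (by exact_mod_cast Finset.mem_insert_of_mem hy))
          obtain ⟨w₁, hw₁M, hfail⟩ :=
            hno γ₀ (by exact_mod_cast hG₀ (by exact_mod_cast Finset.mem_insert_self γ₀ G₁))
          obtain ⟨w', hw'M, hw'⟩ := filt_dir htrans hMfilt hne {w₀, w₁} (by
            intro y hy
            rcases Finset.mem_insert.mp (by exact_mod_cast hy) with rfl | hy'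
            · exact hw₀M
            · exact (Finset.mem_singleton.mp hy') ▸ hw₁M)
          refine ⟨w', hw'M, ?_⟩
          intro γ hγ z hzγ hzw'
          rcases Finset.mem_insert.mp hγ with rfl | hγ'
          · exact hfail z hzγ (htrans hzw' (hw' w₁ (by simp)))
          · exact hcomb₀ γ hγ' z hzγ (htrans hzw' (hw' w₀ (by simp)))
      obtain ⟨w', hw'M, hcomb⟩ := PH1 G subset_rfl
      obtain ⟨r, ⟨γ, hγG, hrγ⟩, hrw⟩ := step w' hw'M
      exact hcomb γ hγG r hrγ hrw
    obtain ⟨γst, hγstG, hγcomp⟩ := hγstar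
    obtain ⟨xst, hxst, hγxst⟩ := hrC γst hγstG
    have hxstM : xst ∉ M := fun h => hxst.2 ⟨h, hxst.1⟩
    have hγt : prec γst t := hGsub hγstG
    exact hxstM (comp_mem htrans hround hlbi hMfilt hmax ht hγt hxst.1 hγxst hγcomp)


/-- Auxiliary avoidance predicate used in the density construction. -/
private def Avoids (prec : P → P → Prop) (t₁ : P) (G : Finset P) (w : P) : Prop :=
  ∀ s, prec s t₁ → prec s w → ∀ s', prec s' s → ∃ r, (∃ γ ∈ G, prec r γ) ∧ prec r s'

private lemma avoids_mono {t₁ w : P} {G G₂ : Finset P} (h : Avoids prec t₁ G w)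
    (hsub : G ⊆ G₂) : Avoids prec t₁ G₂ w := by
  intro s h1 h2 s' h3
  obtain ⟨r, ⟨γ, hγ, hrγ⟩, hrs'⟩ := h s h1 h2 s' h3
  exact ⟨r, ⟨γ, hsub hγ, hrγ⟩, hrs'⟩

/-- Refining one compact-cover witness family two levels down, with avoidance data. -/
private lemma lemma_c (htrans : Transitive prec) (hround : isRound prec) (hlbi : localBi prec)
    {T : Set P} (hTfilt : isFilt prec T) {p t t₁ : P} (htp : prec t p) (ht₁ : prec t₁ t)
    {R : Set P} (hR : cCov prec R (dnSet prec p \ T)) :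
    ∃ (F'' G'' : Finset P), dCov prec R ↑F'' ∧
      (∀ γ ∈ G'', ∃ cc, prec γ cc ∧ prec cc t ∧ cc ∉ T) ∧
      (∀ h ∈ F'', ∃ w, prec h w ∧ prec w p ∧ w ∉ T ∧ Avoids prec t₁ G'' w) := by
  classical
  obtain ⟨F, hdF, hrF⟩ := hR
  -- build the refinement by induction over F
  have KEY : ∀ F₀ : Finset P, (↑F₀ ⊆ (↑F : Set P)) → ∃ (F'' G'' : Finset P),
      (∀ a ∈ blwSet prec ↑F₀, ∃ z ∈ blwSet prec ↑F'', prec z a) ∧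
      (∀ γ ∈ G'', ∃ cc, prec γ cc ∧ prec cc t ∧ cc ∉ T) ∧
      (∀ h ∈ F'', ∃ w, prec h w ∧ prec w p ∧ w ∉ T ∧ Avoids prec t₁ G'' w) := by
    intro F₀
    induction F₀ using Finset.induction_on with
    | empty =>
      refine fun _ => ⟨∅, ∅, ?_, by simp, by simp⟩
      rintro a ⟨q, hq, -⟩
      simp at hq
    | @insert f F₁ hf ih =>
      intro hF₀
      obtain ⟨F''₁, G''₁, hDU₁, hG₁, hW₁⟩ :=
        ih (fun y hy => hF₀ (by exact_mod_cast Finset.mem_insert_of_mem hy))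
      have hfF : f ∈ F := by exact_mod_cast hF₀ (by exact_mod_cast Finset.mem_insert_self f F₁)
      obtain ⟨xx, hxx, hfxx⟩ := hrF f hfF
      have hxp : prec xx p := hxx.1
      have hxT : xx ∉ T := hxx.2
      -- cover dn f compactly inside dn xx
      obtain ⟨K, hdK, hrK⟩ := hlbi p xx xx f f (dn_sub htrans hxp) (dn_sub htrans hxp) hfxx hfxx
      -- per-element data for K, by induction over K
      have KEY2 : ∀ K₀ : Finset P, (↑K₀ ⊆ (↑K : Set P)) → ∃ G₂ : Finset P,
          (∀ γ ∈ G₂, ∃ cc, prec γ cc ∧ prec cc t ∧ cc ∉ T) ∧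
          (∀ h ∈ K₀, ∃ w, prec h w ∧ prec w p ∧ w ∉ T ∧ Avoids prec t₁ G₂ w) := by
        intro K₀
        induction K₀ using Finset.induction_on with
        | empty => exact fun _ => ⟨∅, by simp, by simp⟩
        | @insert k K₁ hk ih2 =>
          intro hK₀
          obtain ⟨G₁, hGp₁, hWp₁⟩ :=
            ih2 (fun y hy => hK₀ (by exact_mod_cast Finset.mem_insert_of_mem hy))
          have hkK : k ∈ K := by
            exact_mod_cast hK₀ (by exact_mod_cast Finset.mem_insert_self k K₁)
          obtain ⟨w, hw, hkw⟩ := hrK k hkK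
          have hwx : prec w xx := hw.1
          have hwp : prec w p := htrans hwx hxp
          have hwT : w ∉ T := fun h => hxT (filt_up hTfilt h hwx)
          obtain ⟨Gw, hdGw, hrGw⟩ := hlbi p t xx t₁ w (dn_sub htrans htp) (dn_sub htrans hxp)
            ht₁ hwx
          refine ⟨G₁ ∪ Gw, ?_, ?_⟩
          · intro γ hγ
            rcases Finset.mem_union.mp hγ with h | h
            · exact hGp₁ γ h
            · obtain ⟨cc, hcc, hγcc⟩ := hrGw γ h
              exact ⟨cc, hγcc, hcc.1, fun hT' => hxT (filt_up hTfilt hT' hcc.2)⟩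
          · intro h hh
            rcases Finset.mem_insert.mp hh with rfl | hh'
            · refine ⟨w, hkw, hwp, hwT, ?_⟩
              intro s hst₁ hsw s' hs's
              obtain ⟨r, ⟨γ, hγGw, hrγ⟩, hrs'⟩ := hdGw s' ⟨s, ⟨hst₁, hsw⟩, hs's⟩
              exact ⟨r, ⟨γ, Finset.mem_union_right _ hγGw, hrγ⟩, hrs'⟩
            · obtain ⟨w', h1, h2, h3, h4⟩ := hWp₁ h hh'
              exact ⟨w', h1, h2, h3, avoids_mono h4 Finset.subset_union_left⟩
      obtain ⟨G₂, hG₂p, hW₂p⟩ := KEY2 K subset_rfl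
      refine ⟨F''₁ ∪ K, G''₁ ∪ G₂, ?_, ?_, ?_⟩
      · rintro a ⟨e₀, he₀, hae₀⟩
        rcases Finset.mem_insert.mp (by exact_mod_cast he₀) with rfl | he₀'
        · -- a ≺ f : refine through K
          obtain ⟨a', ha'⟩ := hround a
          obtain ⟨z, ⟨k, hkK, hzk⟩, hza'⟩ := hdK a' ⟨a, ⟨hae₀, hae₀⟩, ha'⟩
          exact ⟨z, ⟨k, by exact_mod_cast Finset.mem_union_right _ hkK, hzk⟩,
            htrans hza' ha'⟩
        · obtain ⟨z, ⟨h', hh', hzh'⟩, hza⟩ := hDU₁ a ⟨e₀, by exact_mod_cast he₀', hae₀⟩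
          exact ⟨z, ⟨h', by
            have : h' ∈ F''₁ := by exact_mod_cast hh'
            exact_mod_cast Finset.mem_union_left _ this, hzh'⟩, hza⟩
      · intro γ hγ
        rcases Finset.mem_union.mp hγ with h | h
        · exact hG₁ γ h
        · exact hG₂p γ h
      · intro h hh
        rcases Finset.mem_union.mp hh with h' | h'
        · obtain ⟨w', h1, h2, h3, h4⟩ := hW₁ h h'
          exact ⟨w', h1, h2, h3, avoids_mono h4 Finset.subset_union_left⟩
        · obtain ⟨w', h1, h2, h3, h4⟩ := hW₂p h h'
          exact ⟨w', h1, h2, h3, avoids_mono h4 Finset.subset_union_right⟩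
  obtain ⟨F'', G'', hDU, hGp, hWp⟩ := KEY F subset_rfl
  refine ⟨F'', G'', ?_, hGp, hWp⟩
  -- compose the dense covers
  intro a ha
  obtain ⟨r, hr, hra⟩ := hdF a ha
  obtain ⟨z, hz, hzr⟩ := hDU r hr
  exact ⟨z, hz, htrans hzr hra⟩

/-- The core of the density argument: near any locally tight filter, with finitely many
basic-open constraints, there is a maximal filter (which is then locally tight)
satisfying all the constraints. -/
private lemma dense_core (htrans : Transitive prec) (hround : isRound prec)
    (hlbi : localBi prec) (T : LSpec prec) (C : Finset (P × Set P))
    (hC : ∀ c ∈ C, c.1 ∈ T.1 ∧ cCov prec c.2 (dnSet prec c.1 \ T.1)) :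
    ∃ M : LSpec prec, (∀ V, isFilt prec V → M.1 ⊆ V → V = M.1) ∧
      ∀ c ∈ C, M ∈ Obasic prec c.1 c.2 := by
  classical
  obtain ⟨Tne, Tfilt, Tlt⟩ := T.2
  -- a common lower bound of all the p's, inside T
  obtain ⟨t, htT, htall⟩ := filt_dir htrans Tfilt Tne (C.image Prod.fst) (by
    rintro y hy
    obtain ⟨c, hc, rfl⟩ := Finset.mem_image.mp (by exact_mod_cast hy)
    exact (hC c hc).1)
  have htp : ∀ c ∈ C, prec t c.1 := fun c hc => htall c.1 (Finset.mem_image_of_mem _ hc)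
  obtain ⟨t₁, ht₁T, ht₁t⟩ := filt_round Tfilt htT
  -- gather the refined witness data over all constraints
  have KEY : ∀ C₀ : Finset (P × Set P), (↑C₀ ⊆ (↑C : Set (P × Set P))) →
      ∃ G' : Finset P, (∀ γ ∈ G', ∃ cc, prec γ cc ∧ prec cc t ∧ cc ∉ T.1) ∧
      ∀ c ∈ C₀, ∃ F'' : Finset P, dCov prec c.2 ↑F'' ∧
        ∀ h ∈ F'', ∃ w, prec h w ∧ prec w c.1 ∧ w ∉ T.1 ∧ Avoids prec t₁ G' w := by
    intro C₀
    induction C₀ using Finset.induction_on with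
    | empty => exact fun _ => ⟨∅, by simp, by simp⟩
    | @insert c C₁ hc ih =>
      intro hC₀
      obtain ⟨G'₁, hG'₁, hdata₁⟩ :=
        ih (fun y hy => hC₀ (by exact_mod_cast Finset.mem_insert_of_mem hy))
      have hcC : c ∈ C := by exact_mod_cast hC₀ (by exact_mod_cast Finset.mem_insert_self c C₁)
      obtain ⟨F''c, G''c, hdc, hGc, hWc⟩ :=
        lemma_c htrans hround hlbi Tfilt (htp c hcC) ht₁t (hC c hcC).2
      refine ⟨G'₁ ∪ G''c, ?_, ?_⟩
      · intro γ hγ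
        rcases Finset.mem_union.mp hγ with h | h
        · exact hG'₁ γ h
        · exact hGc γ h
      · intro c' hc'
        rcases Finset.mem_insert.mp hc' with rfl | hc''
        · refine ⟨F''c, hdc, fun h hh => ?_⟩
          obtain ⟨w, h1, h2, h3, h4⟩ := hWc h hh
          exact ⟨w, h1, h2, h3, avoids_mono h4 Finset.subset_union_right⟩
        · obtain ⟨F'', h1, h2⟩ := hdata₁ c' hc''
          refine ⟨F'', h1, fun h hh => ?_⟩
          obtain ⟨w, g1, g2, g3, g4⟩ := h2 h hh
          exact ⟨w, g1, g2, g3, avoids_mono g4 Finset.subset_union_left⟩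
  obtain ⟨G', hG'p, hdata⟩ := KEY C subset_rfl
  -- use local tightness of T at t to find a separating q
  have htight := (Tlt t htT).2 {t₁} (by
    intro y hy
    have : y = t₁ := by simpa using hy
    exact this ▸ ⟨ht₁T, ht₁t⟩)
  have hG'sub : ↑G' ⊆ dnSet prec t := by
    intro γ hγ
    obtain ⟨cc, hγcc, hcct, -⟩ := hG'p γ hγ
    exact htrans hγcc hcct
  have hrefines : refines prec ↑G' (dnSet prec t \ (T.1 ∩ dnSet prec t)) := by
    intro γ hγ
    obtain ⟨cc, hγcc, hcct, hccT⟩ := hG'p γ hγ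
    exact ⟨cc, ⟨hcct, fun h => hccT h.1⟩, hγcc⟩
  have hnd : ¬ dCovIn prec (dnSet prec t)
      (hatMeetIn prec (dnSet prec t) ↑({t₁} : Finset P)) ↑G' :=
    fun hd => htight ⟨G', hG'sub, hd, hrefines⟩
  rw [dCovIn] at hnd
  push_neg at hnd
  obtain ⟨q, hqmem, hqneg⟩ := hnd
  obtain ⟨hqt, a, ⟨hat, ha'⟩, hqa⟩ := hqmem
  have hat₁ : prec a t₁ := ha' t₁ (by simp)
  -- a maximal filter containing q
  obtain ⟨U₀, hU₀filt, hqU₀⟩ := exists_filter_mem htrans hround q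
  obtain ⟨M, hMfilt, hU₀M, hMmax⟩ := exists_max_filter htrans hU₀filt
  have hqM : q ∈ M := hU₀M hqU₀
  have hMne : M.Nonempty := ⟨q, hqM⟩
  have hMlt : locallyTight prec M := max_locallyTight htrans hround hlbi hMfilt hMne hMmax
  refine ⟨⟨M, hMne, hMfilt, hMlt⟩, hMmax, ?_⟩
  intro c hcC
  have hqt₁ : prec q t₁ := htrans hqa hat₁
  have hqp : prec q c.1 := htrans (htrans hqt₁ ht₁t) (htp c hcC)
  obtain ⟨F'', hdF'', hW''⟩ := hdata c hcC
  refine ⟨filt_up hMfilt hqM hqp, F'', hdF'', ?_⟩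
  intro h hh
  obtain ⟨w, hhw, hwp, hwT, havoid⟩ := hW'' h hh
  refine ⟨w, ⟨hwp, fun hwM => ?_⟩, hhw⟩
  -- w cannot be in M
  obtain ⟨s, hsM, hsw, hsq⟩ := (hMfilt w q).mp ⟨hwM, hqM⟩
  obtain ⟨s', hs's⟩ := hround s
  obtain ⟨r, ⟨γ, hγG', hrγ⟩, hrs'⟩ := havoid s (htrans hsq hqt₁) hsw s' hs's
  have hrq : prec r q := htrans hrs' (htrans hs's hsq)
  exact hqneg r ⟨htrans hrq hqt, γ, hγG', hrγ⟩ hrq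


/-- Every point of a generated-topology open set lies in a finite intersection of
generators contained in the open set. -/
private lemma gen_finite {α : Type*} {g : Set (Set α)} {o : Set α}
    (h : TopologicalSpace.GenerateOpen g o) :
    ∀ x ∈ o, ∃ 𝒢 : Finset (Set α), ↑𝒢 ⊆ g ∧ x ∈ ⋂₀ (↑𝒢 : Set (Set α)) ∧
      ⋂₀ (↑𝒢 : Set (Set α)) ⊆ o := by
  classical
  induction h with
  | basic s hs =>
    intro x hx
    exact ⟨{s}, by simpa using hs, by simpa using hx, by simp⟩
  | univ =>
    intro x _
    exact ⟨∅, by simp, by simp, by simp⟩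
  | inter s t hs ht ihs iht =>
    intro x hx
    obtain ⟨A, hA1, hA2, hA3⟩ := ihs x hx.1
    obtain ⟨B, hB1, hB2, hB3⟩ := iht x hx.2
    refine ⟨A ∪ B, ?_, ?_, ?_⟩
    · intro y hy
      rcases Finset.mem_union.mp (by exact_mod_cast hy) with h | h
      · exact hA1 (by exact_mod_cast h)
      · exact hB1 (by exact_mod_cast h)
    · intro y hy
      rcases Finset.mem_union.mp (by exact_mod_cast hy) with h | h
      · exact hA2 y (by exact_mod_cast h)
      · exact hB2 y (by exact_mod_cast h)
    · intro y hy
      refine ⟨hA3 (fun z hz => hy z ?_), hB3 (fun z hz => hy z ?_)⟩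
      · exact_mod_cast Finset.mem_union_left _ (by exact_mod_cast hz)
      · exact_mod_cast Finset.mem_union_right _ (by exact_mod_cast hz)
  | sUnion S hS ih =>
    intro x hx
    obtain ⟨s, hsS, hxs⟩ := hx
    obtain ⟨A, hA1, hA2, hA3⟩ := ih s hsS x hxs
    exact ⟨A, hA1, hA2, hA3.trans (Set.subset_sUnion_of_mem hsS)⟩


end AuxProofs

/-- Ultrafilters (maximal filters) are dense in the locally tight
spectrum of an abstract local bi-pseudobasis. -/
theorem ultrafilters_dense (prec : P → P → Prop)
    (htrans : Transitive prec) (hround : isRound prec) (hlbi : localBi prec) :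
    Dense {U : LSpec prec | ∀ V : Set P, isFilt prec V → U.1 ⊆ V → V = U.1} := by
  classical
  rw [dense_iff_inter_open]
  intro o ho hone
  obtain ⟨T, hT⟩ := hone
  have hgen : TopologicalSpace.GenerateOpen
      {O | ∃ (p : P) (R : Set P), cCov prec R {p} ∧ O = Obasic prec p R} o := ho
  obtain ⟨𝒢, h𝒢sub, hT𝒢, h𝒢o⟩ := gen_finite hgen T hT
  -- convert the finite family of generators into a finite family of (p, R) pairs
  have conv : ∀ 𝒜 : Finset (Set (LSpec prec)),
      (↑𝒜 ⊆ {O | ∃ (p : P) (R : Set P), cCov prec R {p} ∧ O = Obasic prec p R}) →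
      T ∈ ⋂₀ (↑𝒜 : Set (Set (LSpec prec))) →
      ∃ C : Finset (P × Set P),
        (∀ c ∈ C, c.1 ∈ T.1 ∧ cCov prec c.2 (dnSet prec c.1 \ T.1)) ∧
        ∀ M : LSpec prec, (∀ c ∈ C, M ∈ Obasic prec c.1 c.2) →
          M ∈ ⋂₀ (↑𝒜 : Set (Set (LSpec prec))) := by
    intro 𝒜
    induction 𝒜 using Finset.induction_on with
    | empty => exact fun _ _ => ⟨∅, by simp, by simp⟩
    | @insert O' 𝒜₁ hO' ih =>
      intro hsub hTmem
      obtain ⟨C₁, hC₁, hback₁⟩ := ih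
        (fun y hy => hsub (by exact_mod_cast Finset.mem_insert_of_mem (by exact_mod_cast hy)))
        (fun y hy => hTmem y
          (by exact_mod_cast Finset.mem_insert_of_mem (by exact_mod_cast hy)))
      obtain ⟨p, R, -, rfl⟩ := hsub
        (by exact_mod_cast Finset.mem_insert_self O' 𝒜₁)
      have hTO : T ∈ Obasic prec p R := hTmem _
        (by exact_mod_cast Finset.mem_insert_self _ 𝒜₁)
      refine ⟨insert (p, R) C₁, ?_, ?_⟩
      · intro c hc
        rcases Finset.mem_insert.mp hc with rfl | hc'
        · exact ⟨hTO.1, hTO.2⟩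
        · exact hC₁ c hc'
      · intro M hM y hy
        rcases Finset.mem_insert.mp (by exact_mod_cast hy) with rfl | hy'
        · exact hM (p, R) (Finset.mem_insert_self _ _)
        · exact hback₁ M (fun c hc => hM c (Finset.mem_insert_of_mem hc)) y
            (by exact_mod_cast hy')
  obtain ⟨C, hC, hback⟩ := conv 𝒢 h𝒢sub hT𝒢
  obtain ⟨M, hMmax, hMO⟩ := dense_core htrans hround hlbi T C hC
  exact ⟨M, h𝒢o (hback M hMO), hMmax⟩
end

section
/- Let $(P,\prec)$ be an abstract local bi-pseudobasis with locally tight spectrum $\mathcal{L}(P)$. If the 'trapping condition' holds — $q'\prec q\prec p$ and $r'\prec r\prec p$ imply $q'^\succ\cap r^\perp\mathrel{\mathsf{C}} q^\succ\cap r'^\perp$ — then every non-empty locally tight filter is an ultrafilter. -/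
variable {P : Type*}

/-- `x^⊥`: the set of elements disjoint from `x`. -/
def perpOf (prec : P → P → Prop) (x : P) : Set P :=
  {s | dnSet prec s ∩ dnSet prec x = ∅}

/-!
Suppose `v ∈ V \ T`. Pick `t ∈ T` and `w ∈ V` below both `v` and `t`; then `w ∉ T`. Choose chains
`u' ≺ u ≺ t` in `T` and `w'' ≺ w' ≺ w` in `V`. Every element of `u'^≻` either meets `w'` or lies in
`u'^≻ ∩ w'^⊥`, which trapping compactly covers by `u^≻ ∩ w''^⊥`. Nothing perpendicular to an element
of `V` lies in `T`, so `{u'}^` is compactly covered inside `t^≻` by elements outside `T`,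
contradicting local tightness of `T` at `t`.
-/

variable {prec : P → P → Prop}

def trappingCondition (prec : P → P → Prop) : Prop :=
  ∀ p q q' r r' : P, prec q' q → prec q p → prec r' r → prec r p →
    cCov prec (dnSet prec q' ∩ perpOf prec r) (dnSet prec q ∩ perpOf prec r')

theorem blwSet_mono_s9 {Q Q' : Set P} (hQ : Q' ⊆ Q) : blwSet prec Q' ⊆ blwSet prec Q :=
  fun _ ⟨q, hq, hpq⟩ => ⟨q, hQ hq, hpq⟩

theorem cCov.mono {Q Q' R R' : Set P} (h : cCov prec Q R) (hQ : Q' ⊆ Q) (hR : R ⊆ R') :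
    cCov prec Q' R' := by
  obtain ⟨F, hdense, hrefine⟩ := h
  refine ⟨F, fun q hq => hdense q (blwSet_mono_s9 hQ hq), fun f hf => ?_⟩
  obtain ⟨r, hr, hfr⟩ := hrefine f hf
  exact ⟨r, hR hr, hfr⟩

theorem cCovIn_dnSet_of_cCov (htrans : Transitive prec) {Q R : Set P} {t : P}
    (h : cCov prec Q R) (hR : R ⊆ dnSet prec t) : cCovIn prec (dnSet prec t) Q R := by
  obtain ⟨F, hdense, hrefine⟩ := h
  have hF : ↑F ⊆ dnSet prec t := fun f hf => by
    obtain ⟨r, hr, hfr⟩ := hrefine f hf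
    exact htrans hfr (hR hr)
  refine ⟨F, hF, fun q ⟨hqt, hqQ⟩ => ?_, hrefine⟩
  obtain ⟨r, ⟨f, hf, hrf⟩, hrq⟩ := hdense q hqQ
  exact ⟨r, ⟨htrans hrq hqt, f, hf, hrf⟩, hrq⟩

theorem mem_perpOf_iff {s x : P} : s ∈ perpOf prec x ↔ ∀ r, prec r s → ¬ prec r x := by
  simp only [perpOf, dnSet, Set.eq_empty_iff_forall_notMem, Set.mem_inter_iff,
    Set.mem_ofPred_eq, not_and]

theorem cCov_dnSet_insert (hround : isRound prec) (htrans : Transitive prec) {u w w' : P}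
    {R : Set P} (hw' : prec w' w) (h : cCov prec (dnSet prec u ∩ perpOf prec w') R) :
    cCov prec (dnSet prec u) (insert w R) := by
  classical
  obtain ⟨F, hdense, hrefine⟩ := h
  refine ⟨insert w' F, fun q ⟨q₀, hq₀u, hqq₀⟩ => ?_, fun f hf => ?_⟩
  · by_cases hmeet : ∃ r, prec r q ∧ prec r w'
    · obtain ⟨r, hrq, hrw'⟩ := hmeet
      exact ⟨r, ⟨w', by simp, hrw'⟩, hrq⟩
    · have hperp : q ∈ perpOf prec w' := mem_perpOf_iff.2 fun r hrq hrw' => hmeet ⟨r, hrq, hrw'⟩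
      obtain ⟨q', hq'q⟩ := hround q
      obtain ⟨r, ⟨f, hf, hrf⟩, hrq'⟩ :=
        hdense q' ⟨q, ⟨htrans hqq₀ hq₀u, hperp⟩, hq'q⟩
      exact ⟨r, ⟨f, by simp [hf], hrf⟩, htrans hrq' hq'q⟩
  · rcases Finset.mem_insert.1 hf with rfl | hf
    · exact ⟨w, Set.mem_insert _ _, hw'⟩
    · obtain ⟨r, hr, hfr⟩ := hrefine f hf
      exact ⟨r, Set.mem_insert_of_mem _ hr, hfr⟩

namespace isFilt

variable {T : Set P}

theorem exists_prec (hT : isFilt prec T) {t : P} (ht : t ∈ T) : ∃ s ∈ T, prec s t := by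
  obtain ⟨s, hs, hst, -⟩ := (hT t t).1 ⟨ht, ht⟩
  exact ⟨s, hs, hst⟩

theorem mem_of_prec (htrans : Transitive prec) (hT : isFilt prec T) {s v : P} (hs : s ∈ T)
    (hsv : prec s v) : v ∈ T := by
  obtain ⟨c, hc, hcs⟩ := hT.exists_prec hs
  exact ((hT v v).2 ⟨c, hc, htrans hcs hsv, htrans hcs hsv⟩).1

theorem not_mem_perpOf (hround : isRound prec) (htrans : Transitive prec) (hT : isFilt prec T)
    {s x : P} (hs : s ∈ T) (hx : x ∈ T) : s ∉ perpOf prec x := fun hperp => by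
  obtain ⟨c, -, hcs, hcx⟩ := (hT s x).1 ⟨hs, hx⟩
  obtain ⟨c', hc'c⟩ := hround c
  exact mem_perpOf_iff.1 hperp c' (htrans hc'c hcs) (htrans hc'c hcx)

end isFilt

theorem locallyTight.mem_of_prec (htrans : Transitive prec) (hround : isRound prec)
    (htrap : trappingCondition prec) {T V : Set P} (hT : isFilt prec T)
    (hTt : locallyTight prec T) (hV : isFilt prec V) (hTV : T ⊆ V) {t w : P} (ht : t ∈ T)
    (hwV : w ∈ V) (hwt : prec w t) : w ∈ T := by
  by_contra hwT
  obtain ⟨u, hu, hut⟩ := hT.exists_prec ht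
  obtain ⟨u', hu', hu'u⟩ := hT.exists_prec hu
  obtain ⟨w', hw'V, hw'w⟩ := hV.exists_prec hwV
  obtain ⟨w'', hw''V, hw''w'⟩ := hV.exists_prec hw'V
  have houtside :
      insert w (dnSet prec u ∩ perpOf prec w'') ⊆ dnSet prec t \ (T ∩ dnSet prec t) := by
    rintro r (rfl | ⟨hru, hperp⟩)
    · exact ⟨hwt, fun h => hwT h.1⟩
    · exact ⟨htrans hru hut, fun h => hV.not_mem_perpOf hround htrans (hTV h.1) hw''V hperp⟩
  have hmeet : hatMeetIn prec (dnSet prec t) ↑({u'} : Finset P) ⊆ dnSet prec u' :=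
    fun q hq => hq.2 u' (by simp)
  have hcov := (cCov_dnSet_insert hround htrans hw'w
    (htrap t u u' w' w'' hu'u hut hw''w' (htrans hw'w hwt))).mono hmeet houtside
  refine (hTt t ht).2 {u'} ?_ (cCovIn_dnSet_of_cCov htrans hcov Set.sdiff_subset)
  simpa using ⟨hu', htrans hu'u hut⟩

theorem trapping_locallyTight_ultrafilter_general (prec : P → P → Prop)
    (htrans : Transitive prec) (hround : isRound prec)
    (htrap : ∀ p q q' r r' : P, prec q' q → prec q p → prec r' r → prec r p →
      cCov prec (dnSet prec q' ∩ perpOf prec r) (dnSet prec q ∩ perpOf prec r')) :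
    ∀ T : Set P, T.Nonempty → isFilt prec T → locallyTight prec T →
      ∀ V : Set P, isFilt prec V → T ⊆ V → V = T := by
  intro T ⟨t, ht⟩ hT hTt V hV hTV
  refine Set.Subset.antisymm (fun v hv => ?_) hTV
  obtain ⟨w, hwV, hwv, hwt⟩ := (hV v t).1 ⟨hv, hTV ht⟩
  exact hT.mem_of_prec htrans (hTt.mem_of_prec htrans hround htrap hT hV hTV ht hwV hwt) hwv

/-- If the trapping condition holds in an abstract local
bi-pseudobasis, then every non-empty locally tight filter is an ultrafilter. -/
theorem trapping_locallyTight_ultrafilter (prec : P → P → Prop)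
    (htrans : Transitive prec) (hround : isRound prec) (hlbi : localBi prec)
    (htrap : ∀ p q q' r r' : P, prec q' q → prec q p → prec r' r → prec r p →
      cCov prec (dnSet prec q' ∩ perpOf prec r) (dnSet prec q ∩ perpOf prec r')) :
    ∀ T : Set P, T.Nonempty → isFilt prec T → locallyTight prec T →
      ∀ V : Set P, isFilt prec V → T ⊆ V → V = T :=
  trapping_locallyTight_ultrafilter_general prec htrans hround htrap
end

section
/- Let $(P,\prec)$ be an abstract local bi-pseudobasis. Each basic open set $O^p=\{T\in\mathcal{L}(P):p\in T\}$ is a Hausdorff subspace of the locally tight spectrum $\mathcal{L}(P)$; consequently $\mathcal{L}(P)$ is locally compact and locally Hausdorff. -/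
variable {P : Type*}

/-! ### Auxiliary basic lemmas -/

section Basics
variable {prec : P → P → Prop}

lemma filt_up_s11 {T : Set P} (hT : isFilt prec T) {a b : P} (ha : a ∈ T) (hab : prec a b) : b ∈ T :=
  ((hT b b).mpr ⟨a, ha, hab, hab⟩).1

lemma filt_pair {T : Set P} (hT : isFilt prec T) {a b : P} (ha : a ∈ T) (hb : b ∈ T) :
    ∃ c ∈ T, prec c a ∧ prec c b := (hT a b).mp ⟨ha, hb⟩

lemma filt_meet (htrans : Transitive prec) {T : Set P} (hT : isFilt prec T) (F : Finset P)
    (h : ∀ u ∈ F, ∃ y ∈ T, prec y u) {a : P} (ha : a ∈ T) :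
    ∃ v ∈ T, prec v a ∧ ∀ u ∈ F, prec v u := by
  classical
  induction F using Finset.induction_on with
  | empty =>
      obtain ⟨c, hc, hca, -⟩ := filt_pair hT ha ha
      exact ⟨c, hc, hca, fun s hs => absurd hs (by simp)⟩
  | @insert x s hxs ih =>
      obtain ⟨v, hv, hva, hvs⟩ := ih (fun u hu => h u (Finset.mem_insert_of_mem hu))
      obtain ⟨y, hy, hyx⟩ := h x (Finset.mem_insert_self _ _)
      obtain ⟨c, hc, hcv, hcy⟩ := filt_pair hT hv hy
      refine ⟨c, hc, htrans hcv hva, ?_⟩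
      intro u hu
      rcases Finset.mem_insert.1 hu with rfl | hu
      · exact htrans hcy hyx
      · exact htrans hcv (hvs u hu)

lemma cCov_empty (X : Set P) : cCov prec ∅ X :=
  ⟨∅, fun q hq => by rcases hq with ⟨y, hy, -⟩; exact absurd hy (by exact fun h => h),
   fun f hf => absurd hf (by simp)⟩

lemma dCov_mono_left {Q Q' : Set P} {F : Set P} (h : blwSet prec Q' ⊆ blwSet prec Q)
    (hd : dCov prec Q F) : dCov prec Q' F := fun q hq => hd q (h hq)

lemma refines_mono {F X Y : Set P} (h : X ⊆ Y) (hr : refines prec F X) : refines prec F Y :=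
  fun f hf => let ⟨x, hx, hfx⟩ := hr f hf; ⟨x, h hx, hfx⟩

/-- Composition of a dense access with compact covers of each piece. -/
lemma cCov_compose (htrans : Transitive prec) (hround : isRound prec)
    {Q Zall : Set P} (F : Finset P) (hd : dCov prec Q ↑F)
    (hc : ∀ f ∈ F, ∃ Z, cCov prec (dnSet prec f) Z ∧ Z ⊆ Zall) :
    cCov prec Q Zall := by
  classical
  have hc' : ∀ f, f ∈ F → ∃ H : Finset P,
      dCov prec (dnSet prec f) ↑H ∧ refines prec ↑H Zall := by
    intro f hf
    obtain ⟨Z, ⟨H, dH, rH⟩, hZ⟩ := hc f hf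
    exact ⟨H, dH, refines_mono hZ rH⟩
  choose Hf hdf hrf using hc'
  refine ⟨F.attach.biUnion (fun x => Hf x.1 x.2), ?_, ?_⟩
  · intro q hq
    obtain ⟨r, hr, hrq⟩ := hd q hq
    obtain ⟨f, hfF, hrf'⟩ := hr
    obtain ⟨r', hr'⟩ := hround r
    have hfF' : f ∈ F := hfF
    obtain ⟨h, hh, hhr'⟩ := hdf f hfF' r' ⟨r, hrf', hr'⟩
    obtain ⟨h2, hh2, hhh2⟩ := hh
    refine ⟨h, ⟨h2, ?_, hhh2⟩, htrans (htrans hhr' hr') hrq⟩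
    exact Finset.mem_coe.2 (Finset.mem_biUnion.2 ⟨⟨f, hfF'⟩, Finset.mem_attach _ _,
      Finset.mem_coe.1 hh2⟩)
  · intro h hh
    obtain ⟨x, -, hx⟩ := Finset.mem_biUnion.1 (Finset.mem_coe.1 hh)
    exact hrf x.1 x.2 h (Finset.mem_coe.2 hx)

/-- Turn a global compact cover below `v` into a relative one inside `amb`. -/
lemma cCovIn_of_cCov (htrans : Transitive prec) {amb v : P} {W : Set P}
    (hva : prec v amb) (h : cCov prec (dnSet prec v) {z | prec z amb ∧ z ∉ W}) :
    cCovIn prec (dnSet prec amb) (hatMeetIn prec (dnSet prec amb) {v})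
      (dnSet prec amb \ (W ∩ dnSet prec amb)) := by
  obtain ⟨H, dH, rH⟩ := h
  have hHamb : ∀ h' ∈ H, prec h' amb := by
    intro h' hh'
    obtain ⟨z, hz, hh'z⟩ := rH h' hh'
    exact htrans hh'z hz.1
  refine ⟨H, fun h' hh' => hHamb h' (Finset.mem_coe.1 hh'), ?_, ?_⟩
  · rintro q ⟨hq1, h₀, hh₀, hqh₀⟩
    have hqv : q ∈ blwSet prec (dnSet prec v) := ⟨h₀, hh₀.2 v rfl, hqh₀⟩
    obtain ⟨r, ⟨h2, hh2, hrh2⟩, hrq⟩ := dH q hqv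
    exact ⟨r, ⟨htrans hrh2 (hHamb h2 hh2), h2, hh2, hrh2⟩, hrq⟩
  · intro f hf
    obtain ⟨z, hz, hfz⟩ := rH f hf
    exact ⟨z, ⟨hz.1, fun hzW => hz.2 hzW.1⟩, hfz⟩

/-- A locally tight filter cannot be "covered away" near one of its members. -/
lemma tight_contra (htrans : Transitive prec) {W : LSpec prec} {amb v : P}
    (hamb : amb ∈ W.1) (hv : v ∈ W.1) (hva : prec v amb)
    (h : cCov prec (dnSet prec v) {z | prec z amb ∧ z ∉ W.1}) : False := by
  have hsub : (↑({v} : Finset P) : Set P) ⊆ W.1 ∩ dnSet prec amb := by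
    simp only [Finset.coe_singleton, Set.singleton_subset_iff]
    exact ⟨hv, hva⟩
  have ht := (W.2.2.2 amb hamb).2 {v} hsub
  apply ht
  have h2 := cCovIn_of_cCov htrans hva h
  rw [Finset.coe_singleton]
  exact h2

/-- Each `O^x` (with trivial avoided part) is open, and equals `{T | x ∈ T}`. -/
lemma isOpen_memSet (x : P) : IsOpen {T : LSpec prec | x ∈ T.1} := by
  have he : {T : LSpec prec | x ∈ T.1} = Obasic prec x ∅ := by
    ext T
    exact ⟨fun h => ⟨h, cCov_empty _⟩, fun h => h.1⟩
  rw [he]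
  exact TopologicalSpace.GenerateOpen.basic _ ⟨x, ∅, cCov_empty _, rfl⟩

lemma isOpen_Obasic {q : P} {R : Set P} (h : cCov prec R {q}) : IsOpen (Obasic prec q R) :=
  TopologicalSpace.GenerateOpen.basic _ ⟨q, R, h, rfl⟩

/-- Choice of a refinement witness. -/
noncomputable def pick (prec : P → P → Prop) (Q : Set P) (f : P) : P :=
  letI := Classical.dec (∃ r ∈ Q, prec f r)
  if h : ∃ r ∈ Q, prec f r then h.choose else f

lemma pick_spec {prec : P → P → Prop} {Q : Set P} {f : P} (h : ∃ r ∈ Q, prec f r) :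
    pick prec Q f ∈ Q ∧ prec f (pick prec Q f) := by
  simp only [pick]
  rw [dif_pos h]
  exact ⟨h.choose_spec.1, h.choose_spec.2⟩

end Basics

/-! ### The ultrafilter limit construction -/

section Ulimit
variable {prec : P → P → Prop}

/-- `W` "touches" the region below `g`, relative to the cone below `m`. -/
def Jset (prec : P → P → Prop) (m g : P) : Set (LSpec prec) :=
  {W | ¬ cCov prec (dnSet prec g) (dnSet prec m \ W.1)}

/-- The candidate limit filter of an ultrafilter `𝔘`, anchored at `p`. -/
def Vlim (prec : P → P → Prop) (𝔘 : Ultrafilter (LSpec prec)) (p : P) : Set P :=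
  {a | ∃ m w g, prec g w ∧ prec w m ∧ prec m a ∧ prec m p ∧ Jset prec m g ∈ 𝔘}

/-- A certificate below `x`. -/
def VCERT (prec : P → P → Prop) (𝔘 : Ultrafilter (LSpec prec)) (x : P) : Prop :=
  ∃ m w g, prec g w ∧ prec w m ∧ prec m x ∧ Jset prec m g ∈ 𝔘

variable {𝔘 : Ultrafilter (LSpec prec)} {p : P}

lemma Vlim_up (htrans : Transitive prec) {a b : P} (ha : a ∈ Vlim prec 𝔘 p) (hab : prec a b) : b ∈ Vlim prec 𝔘 p := by
  obtain ⟨m, w, g, h1, h2, h3, h4, h5⟩ := ha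
  exact ⟨m, w, g, h1, h2, htrans h3 hab, h4, h5⟩

lemma Vlim_of_VCERT (htrans : Transitive prec) {x : P} (h : VCERT prec 𝔘 x) (hxp : prec x p) : x ∈ Vlim prec 𝔘 p := by
  obtain ⟨m, w, g, h1, h2, h3, h5⟩ := h
  exact ⟨m, w, g, h1, h2, h3, htrans h3 hxp, h5⟩

lemma Vlim_of_VCERT' (htrans : Transitive prec) {x a : P} (h : VCERT prec 𝔘 x) (hxp : prec x p) (hxa : prec x a) :
    a ∈ Vlim prec 𝔘 p :=
  Vlim_up htrans (Vlim_of_VCERT htrans h hxp) hxa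

/-- Key membership: a spectrum point touching `J(m,g)` has members below `w`. -/
lemma key_mem (htrans : Transitive prec) (hlbi : localBi prec) {m w g : P} (hgw : prec g w) (hwm : prec w m)
    {W : LSpec prec} (hW : W ∈ Jset prec m g) : ∃ y ∈ W.1, prec y w := by
  have hsub : dnSet prec w ⊆ dnSet prec m := fun x hx => htrans hx hwm
  have hcc := hlbi m w w g g hsub hsub hgw hgw
  rw [Set.inter_self, Set.inter_self] at hcc
  obtain ⟨F, dF, rF⟩ := hcc
  by_cases hex : ∃ y ∈ W.1, prec y w
  · exact hex
  · exfalso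
    apply hW
    refine ⟨F, dF, ?_⟩
    intro f hf
    obtain ⟨y, hy, hfy⟩ := rF f hf
    have hy' : prec y w := hy
    refine ⟨y, ⟨htrans hy' hwm, ?_⟩, hfy⟩
    intro hyW
    exact hex ⟨y, hyW, hy'⟩

/-- The tower dichotomy at one element `f ≺ x ≺ p`. -/
lemma UL (htrans : Transitive prec) (hround : isRound prec) (hlbi : localBi prec)
    (𝔘 : Ultrafilter (LSpec prec)) (p : P) {f x : P} (hfx : prec f x) (hxp : prec x p) :
    VCERT prec 𝔘 x ∨
    ∃ C ∈ 𝔘, ∀ W ∈ C, cCov prec (dnSet prec f) {z | prec z x ∧ z ∉ (W : LSpec prec).1} := by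
  classical
  have hxsub : dnSet prec x ⊆ dnSet prec p := fun y hy => htrans hy hxp
  have hG := hlbi p x x f f hxsub hxsub hfx hfx
  rw [Set.inter_self, Set.inter_self] at hG
  obtain ⟨G, dG, rG⟩ := hG
  have hu : ∀ g, g ∈ G → ∃ u, u ∈ dnSet prec x ∧ prec g u := by
    intro g hg
    obtain ⟨u, hu1, hu2⟩ := rG g (Finset.mem_coe.2 hg)
    exact ⟨u, hu1, hu2⟩
  choose u hux hgu using hu
  have hK : ∀ g (hg : g ∈ G), ∃ K : Finset P,
      dCov prec (dnSet prec g) ↑K ∧ refines prec ↑K (dnSet prec (u g hg)) := by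
    intro g hg
    have h1 : dnSet prec (u g hg) ⊆ dnSet prec p :=
      fun y hy => htrans hy (htrans (hux g hg) hxp)
    have := hlbi p (u g hg) (u g hg) g g h1 h1 (hgu g hg) (hgu g hg)
    rw [Set.inter_self, Set.inter_self] at this
    exact this
  choose K dK rK using hK
  by_cases hex : ∃ g, ∃ hg : g ∈ G, ∃ k ∈ K g hg, Jset prec (u g hg) k ∈ 𝔘
  · obtain ⟨g, hg, k, hk, hJ⟩ := hex
    obtain ⟨y, hy, hky⟩ := rK g hg k (Finset.mem_coe.2 hk)
    exact Or.inl ⟨u g hg, y, k, hky, hy, hux g hg, hJ⟩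
  · right
    push_neg at hex
    refine ⟨⋂ x ∈ G.attach, ⋂ k ∈ (K x.1 x.2).attach, (Jset prec (u x.1 x.2) k.1)ᶜ, ?_, ?_⟩
    · refine (Filter.biInter_finset_mem _).2 (fun x _ => ?_)
      refine (Filter.biInter_finset_mem _).2 (fun k _ => ?_)
      exact Ultrafilter.compl_mem_iff_notMem.2 (hex x.1 x.2 k.1 k.2)
    · intro W hW
      have hWc : ∀ (g : P) (hg : g ∈ G), ∀ k ∈ K g hg,
          cCov prec (dnSet prec k) (dnSet prec (u g hg) \ W.1) := by
        intro g hg k hk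
        have h1 := Set.mem_iInter₂.1 hW ⟨g, hg⟩ (Finset.mem_attach _ _)
        have h2 := Set.mem_iInter₂.1 h1 ⟨k, hk⟩ (Finset.mem_attach _ _)
        exact not_not.1 h2
      apply cCov_compose htrans hround G dG
      intro g hg
      refine ⟨dnSet prec (u g hg) \ W.1, ?_, ?_⟩
      · apply cCov_compose htrans hround (K g hg) (dK g hg)
        intro k hk
        exact ⟨dnSet prec (u g hg) \ W.1, hWc g hg k hk, subset_rfl⟩
      · rintro z ⟨hz1, hz2⟩
        exact ⟨htrans hz1 (hux g hg), hz2⟩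

/-- Tower dichotomy over a finite family. -/
lemma alpha (htrans : Transitive prec) (hround : isRound prec) (hlbi : localBi prec)
    (𝔘 : Ultrafilter (LSpec prec)) (p : P) (D : Finset P) (xm : P → P)
    (h1 : ∀ f ∈ D, prec f (xm f)) (h2 : ∀ f ∈ D, prec (xm f) p) :
    (∃ f ∈ D, VCERT prec 𝔘 (xm f)) ∨
    (∃ C ∈ 𝔘, ∀ W ∈ C, ∀ f ∈ D,
      cCov prec (dnSet prec f) {z | prec z (xm f) ∧ z ∉ (W : LSpec prec).1}) := by
  classical
  by_cases hex : ∃ f ∈ D, VCERT prec 𝔘 (xm f)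
  · exact Or.inl hex
  · right
    push_neg at hex
    have hC : ∀ f, f ∈ D → ∃ C ∈ 𝔘, ∀ W ∈ C,
        cCov prec (dnSet prec f) {z | prec z (xm f) ∧ z ∉ (W : LSpec prec).1} := by
      intro f hf
      rcases UL htrans hround hlbi 𝔘 p (h1 f hf) (h2 f hf) with h | h
      · exact absurd h (hex f hf)
      · exact h
    choose C hCmem hCprop using hC
    refine ⟨⋂ x ∈ D.attach, C x.1 x.2, ?_, ?_⟩
    · exact (Filter.biInter_finset_mem _).2 (fun x _ => hCmem x.1 x.2)
    · intro W hW f hf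
      exact hCprop f hf W (Set.mem_iInter₂.1 hW ⟨f, hf⟩ (Finset.mem_attach _ _))

/-- Directedness of the limit. -/
lemma Vlim_directed (htrans : Transitive prec) (hround : isRound prec) (hlbi : localBi prec)
    {𝔘 : Ultrafilter (LSpec prec)} {p : P} {a b : P}
    (ha : a ∈ Vlim prec 𝔘 p) (hb : b ∈ Vlim prec 𝔘 p) :
    ∃ c ∈ Vlim prec 𝔘 p, prec c a ∧ prec c b := by
  classical
  obtain ⟨ma, wa, ga, hga, hwa, hma, hmap, hJa⟩ := ha
  obtain ⟨mb, wb, gb, hgb, hwb, hmb, hmbp, hJb⟩ := hb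
  obtain ⟨F₁, dF₁, rF₁⟩ := hlbi p ma mb wa wb (fun y hy => htrans hy hmap)
    (fun y hy => htrans hy hmbp) hwa hwb
  set X : Set P := dnSet prec ma ∩ dnSet prec mb with hX
  set xm : P → P := pick prec X with hxm
  have hxm1 : ∀ f ∈ F₁, prec f (xm f) := fun f hf => (pick_spec (rF₁ f hf)).2
  have hxm2 : ∀ f ∈ F₁, xm f ∈ X := fun f hf => (pick_spec (rF₁ f hf)).1
  rcases alpha htrans hround hlbi 𝔘 p F₁ xm hxm1
      (fun f hf => htrans (hxm2 f hf).1 hmap) with ⟨f, hf, hcert⟩ | ⟨C, hC, hCp⟩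
  · refine ⟨xm f, ?_, htrans (hxm2 f hf).1 hma, htrans (hxm2 f hf).2 hmb⟩
    exact Vlim_of_VCERT htrans hcert (htrans (hxm2 f hf).1 hmap)
  · exfalso
    obtain ⟨W, hWC, hWa, hWb⟩ :=
      Ultrafilter.nonempty_of_mem (Filter.inter_mem hC (Filter.inter_mem hJa hJb))
    obtain ⟨ya, hya, hyawa⟩ := key_mem htrans hlbi hga hwa hWa
    obtain ⟨yb, hyb, hybwb⟩ := key_mem htrans hlbi hgb hwb hWb
    obtain ⟨v, hv, hvya, hvyb⟩ := filt_pair W.2.2.1 hya hyb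
    have hvwa : prec v wa := htrans hvya hyawa
    have hvwb : prec v wb := htrans hvyb hybwb
    have hvp : prec v p := htrans hvwa (htrans hwa hmap)
    have hpW : p ∈ W.1 := filt_up_s11 W.2.2.1 hya (htrans hyawa (htrans hwa hmap))
    have hdv : dCov prec (dnSet prec v) ↑F₁ := by
      refine dCov_mono_left ?_ dF₁
      rintro q ⟨y, hy, hqy⟩
      exact ⟨y, ⟨htrans hy hvwa, htrans hy hvwb⟩, hqy⟩
    have hcov : cCov prec (dnSet prec v) {z | prec z p ∧ z ∉ W.1} := by
      apply cCov_compose htrans hround F₁ hdv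
      intro f hf
      refine ⟨{z | prec z (xm f) ∧ z ∉ W.1}, hCp W hWC f hf, ?_⟩
      rintro z ⟨hz1, hz2⟩
      exact ⟨htrans hz1 (htrans (hxm2 f hf).1 hmap), hz2⟩
    exact tight_contra htrans hpW hv hvp hcov

lemma Vlim_isFilt (htrans : Transitive prec) (hround : isRound prec) (hlbi : localBi prec)
    {𝔘 : Ultrafilter (LSpec prec)} {p : P} : isFilt prec (Vlim prec 𝔘 p) := by
  intro t u
  constructor
  · rintro ⟨ht, hu⟩
    obtain ⟨c, hc, hct, hcu⟩ := Vlim_directed htrans hround hlbi ht hu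
    exact ⟨c, hc, hct, hcu⟩
  · rintro ⟨s, hs, hst, hsu⟩
    exact ⟨Vlim_up htrans hs hst, Vlim_up htrans hs hsu⟩

/-- If `𝔘`-many points contain `x` and `x ≺ z ≺ q` with `q` in the limit, then `z` is too. -/
lemma mem_lim (htrans : Transitive prec) (hround : isRound prec) (hlbi : localBi prec)
    {𝔘 : Ultrafilter (LSpec prec)} {p : P} {q x z : P}
    (hq : q ∈ Vlim prec 𝔘 p) (hxz : prec x z) (hzq : prec z q)
    (hX : {W : LSpec prec | x ∈ W.1} ∈ 𝔘) : z ∈ Vlim prec 𝔘 p := by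
  classical
  obtain ⟨m, w, g, hgw, hwm, hmq, hmp, hJ⟩ := hq
  obtain ⟨E, dE, rE⟩ := hlbi q z m x w (fun y hy => htrans hy hzq)
    (fun y hy => htrans hy hmq) hxz hwm
  set Y : Set P := dnSet prec z ∩ dnSet prec m with hY
  set xm : P → P := pick prec Y with hxm
  have hxm1 : ∀ f ∈ E, prec f (xm f) := fun f hf => (pick_spec (rE f hf)).2
  have hxm2 : ∀ f ∈ E, xm f ∈ Y := fun f hf => (pick_spec (rE f hf)).1
  rcases alpha htrans hround hlbi 𝔘 p E xm hxm1
      (fun f hf => htrans (hxm2 f hf).2 hmp) with ⟨f, hf, hcert⟩ | ⟨C, hC, hCp⟩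
  · exact Vlim_of_VCERT' htrans hcert (htrans (hxm2 f hf).2 hmp) (hxm2 f hf).1
  · exfalso
    obtain ⟨W, hWC, hWx, hWJ⟩ :=
      Ultrafilter.nonempty_of_mem (Filter.inter_mem hC (Filter.inter_mem hX hJ))
    obtain ⟨y₀, hy₀, hy₀w⟩ := key_mem htrans hlbi hgw hwm hWJ
    obtain ⟨v, hv, hvx, hvy₀⟩ := filt_pair W.2.2.1 hWx hy₀
    have hqW : q ∈ W.1 := filt_up_s11 W.2.2.1 hy₀ (htrans hy₀w (htrans hwm hmq))
    have hvq : prec v q := htrans hvx (htrans hxz hzq)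
    have hdv : dCov prec (dnSet prec v) ↑E := by
      refine dCov_mono_left ?_ dE
      rintro q₀ ⟨y, hy, hq₀y⟩
      exact ⟨y, ⟨htrans hy hvx, htrans hy (htrans hvy₀ hy₀w)⟩, hq₀y⟩
    have hcov : cCov prec (dnSet prec v) {z' | prec z' q ∧ z' ∉ W.1} := by
      apply cCov_compose htrans hround E hdv
      intro f hf
      refine ⟨{z' | prec z' (xm f) ∧ z' ∉ W.1}, hCp W hWC f hf, ?_⟩
      rintro z' ⟨hz1, hz2⟩
      exact ⟨htrans hz1 (htrans (hxm2 f hf).1 hzq), hz2⟩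
    exact tight_contra htrans hqW hv hvq hcov

lemma Vlim_abv (htrans : Transitive prec) (hround : isRound prec) (hlbi : localBi prec)
    {𝔘 : Ultrafilter (LSpec prec)} {p t : P} (htV : t ∈ Vlim prec 𝔘 p) :
    Vlim prec 𝔘 p ∩ dnSet prec t =
      abvIn prec (dnSet prec t) (Vlim prec 𝔘 p ∩ dnSet prec t) := by
  ext x
  constructor
  · rintro ⟨hxV, hxt⟩
    obtain ⟨c, hc, hcx, hct⟩ := Vlim_directed htrans hround hlbi hxV htV
    exact ⟨hxt, c, ⟨hc, hct⟩, hcx⟩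
  · rintro ⟨hxt, c, ⟨hcV, hct⟩, hcx⟩
    exact ⟨Vlim_up htrans hcV hcx, hxt⟩

/-- The limit is tight at the anchor `p`. -/
lemma Vlim_tight_p (htrans : Transitive prec) (hround : isRound prec) (hlbi : localBi prec)
    {𝔘 : Ultrafilter (LSpec prec)} {p : P} (hpV : p ∈ Vlim prec 𝔘 p) :
    isTightIn prec (dnSet prec p) (Vlim prec 𝔘 p ∩ dnSet prec p) := by
  classical
  refine ⟨Vlim_abv htrans hround hlbi hpV, ?_⟩
  intro F hF hccov
  obtain ⟨G, hGp, dG, rG⟩ := hccov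
  set Z : Set P := dnSet prec p \ (Vlim prec 𝔘 p ∩ dnSet prec p) with hZdef
  set zm : P → P := pick prec Z with hzmdef
  have hzm1 : ∀ g ∈ G, prec g (zm g) := fun g hg => (pick_spec (rG g hg)).2
  have hzmp : ∀ g ∈ G, prec (zm g) p := fun g hg => (pick_spec (rG g hg)).1.1
  have hzmV : ∀ g ∈ G, zm g ∉ Vlim prec 𝔘 p := fun g hg hmem =>
    (pick_spec (rG g hg)).1.2 ⟨hmem, (pick_spec (rG g hg)).1.1⟩
  have hCg : ∀ g, g ∈ G → ∃ C ∈ 𝔘, ∀ W ∈ C,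
      cCov prec (dnSet prec g) {z' | prec z' p ∧ z' ∉ (W : LSpec prec).1} := by
    intro g hg
    have hsub : dnSet prec (zm g) ⊆ dnSet prec p := fun y hy => htrans hy (hzmp g hg)
    have hF₁ := hlbi p (zm g) (zm g) g g hsub hsub (hzm1 g hg) (hzm1 g hg)
    rw [Set.inter_self, Set.inter_self] at hF₁
    obtain ⟨F₁, dF₁, rF₁⟩ := hF₁
    set xm : P → P := pick prec (dnSet prec (zm g)) with hxmdef
    have hxm1 : ∀ f ∈ F₁, prec f (xm f) := fun f hf => (pick_spec (rF₁ f hf)).2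
    have hxm2 : ∀ f ∈ F₁, prec (xm f) (zm g) := fun f hf => (pick_spec (rF₁ f hf)).1
    rcases alpha htrans hround hlbi 𝔘 p F₁ xm hxm1
        (fun f hf => htrans (hxm2 f hf) (hzmp g hg)) with ⟨f, hf, hcert⟩ | ⟨C, hC, hCp⟩
    · exact absurd (Vlim_of_VCERT' htrans hcert
        (htrans (hxm2 f hf) (hzmp g hg)) (hxm2 f hf)) (hzmV g hg)
    · refine ⟨C, hC, fun W hW => ?_⟩
      apply cCov_compose htrans hround F₁ dF₁
      intro f hf
      exact ⟨{z' | prec z' (xm f) ∧ z' ∉ W.1}, hCp W hW f hf,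
        fun z' hz' => ⟨htrans hz'.1 (htrans (hxm2 f hf) (hzmp g hg)), hz'.2⟩⟩
  choose Cg hCgmem hCgprop using hCg
  have hFc : ∀ u, u ∈ F → ∃ m w g, prec g w ∧ prec w m ∧ prec m u ∧ prec m p ∧
      Jset prec m g ∈ 𝔘 := fun u hu => (hF hu).1
  choose mF wF gF hgF hwF hmF hmFp hJF using hFc
  have hpcert := hpV
  obtain ⟨mp, wp, gp, hgwp, hwmp, hmpp, -, hJp⟩ := hpcert
  have hbig : ((⋂ x ∈ G.attach, Cg x.1 x.2) ∩
      (Jset prec mp gp ∩ ⋂ u ∈ F.attach, Jset prec (mF u.1 u.2) (gF u.1 u.2))) ∈ 𝔘 := by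
    refine Filter.inter_mem ((Filter.biInter_finset_mem _).2 (fun x _ => hCgmem x.1 x.2))
      (Filter.inter_mem hJp ((Filter.biInter_finset_mem _).2 (fun u _ => hJF u.1 u.2)))
  obtain ⟨W, hWC, hWp, hWF⟩ := Ultrafilter.nonempty_of_mem hbig
  obtain ⟨yp, hyp, hypwp⟩ := key_mem htrans hlbi hgwp hwmp hWp
  have hpW : p ∈ W.1 := filt_up_s11 W.2.2.1 hyp (htrans hypwp (htrans hwmp hmpp))
  have hmeet : ∀ u ∈ F, ∃ y ∈ W.1, prec y u := by
    intro u hu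
    have hWu : W ∈ Jset prec (mF u hu) (gF u hu) :=
      Set.mem_iInter₂.1 hWF ⟨u, hu⟩ (Finset.mem_attach _ _)
    obtain ⟨y, hy, hyw⟩ := key_mem htrans hlbi (hgF u hu) (hwF u hu) hWu
    exact ⟨y, hy, htrans hyw (htrans (hwF u hu) (hmF u hu))⟩
  obtain ⟨v, hvW, hvp, hvF⟩ := filt_meet htrans W.2.2.1 F hmeet hpW
  have hdv : dCov prec (dnSet prec v) ↑G := by
    rintro q ⟨y, hy, hqy⟩
    have hqIn : q ∈ blwIn prec (dnSet prec p) (hatMeetIn prec (dnSet prec p) ↑F) := by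
      refine ⟨htrans (htrans hqy hy) hvp, v,
        ⟨hvp, fun u hu => hvF u (Finset.mem_coe.1 hu)⟩, htrans hqy hy⟩
    obtain ⟨r, ⟨hrp, g', hg', hrg'⟩, hrq⟩ := dG q hqIn
    exact ⟨r, ⟨g', hg', hrg'⟩, hrq⟩
  have hcov : cCov prec (dnSet prec v) {z' | prec z' p ∧ z' ∉ W.1} := by
    apply cCov_compose htrans hround G hdv
    intro g hg
    exact ⟨_, hCgprop g hg W (Set.mem_iInter₂.1 hWC ⟨g, hg⟩ (Finset.mem_attach _ _)), subset_rfl⟩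
  exact tight_contra htrans hpW hvW hvp hcov

/-- Tightness transfers from the anchor to every member: the limit is locally tight. -/
lemma Vlim_locallyTight (htrans : Transitive prec) (hround : isRound prec) (hlbi : localBi prec)
    {𝔘 : Ultrafilter (LSpec prec)} {p : P} (hpV : p ∈ Vlim prec 𝔘 p) :
    locallyTight prec (Vlim prec 𝔘 p) := by
  classical
  intro t htV
  refine ⟨Vlim_abv htrans hround hlbi htV, ?_⟩
  intro F hF hccov
  obtain ⟨G, hGt, dG, rG⟩ := hccov
  obtain ⟨c, hcV, hct, hcp⟩ := Vlim_directed htrans hround hlbi htV hpV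
  have hVfilt : isFilt prec (Vlim prec 𝔘 p) := Vlim_isFilt htrans hround hlbi
  have hmeet : ∀ u ∈ F, ∃ y ∈ Vlim prec 𝔘 p, prec y u := by
    intro u hu
    obtain ⟨y, hy, hyu, -⟩ := Vlim_directed htrans hround hlbi (hF hu).1 (hF hu).1
    exact ⟨y, hy, hyu⟩
  obtain ⟨cs, hcsV, hcsc, hcsF⟩ := filt_meet htrans hVfilt F hmeet hcV
  set Z : Set P := dnSet prec t \ (Vlim prec 𝔘 p ∩ dnSet prec t) with hZdef
  set zm : P → P := pick prec Z with hzmdef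
  have hzm1 : ∀ g ∈ G, prec g (zm g) := fun g hg => (pick_spec (rG g hg)).2
  have hzmt : ∀ g ∈ G, prec (zm g) t := fun g hg => (pick_spec (rG g hg)).1.1
  have hzmV : ∀ g ∈ G, zm g ∉ Vlim prec 𝔘 p := fun g hg hmem =>
    (pick_spec (rG g hg)).1.2 ⟨hmem, (pick_spec (rG g hg)).1.1⟩
  have hB : ∀ g, g ∈ G → ∃ F₁ : Finset P,
      dCov prec (dnSet prec g ∩ dnSet prec cs) ↑F₁ ∧
      refines prec ↑F₁ (dnSet prec (zm g) ∩ dnSet prec c) := by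
    intro g hg
    exact hlbi t (zm g) c g cs (fun y hy => htrans hy (hzmt g hg))
      (fun y hy => htrans hy hct) (hzm1 g hg) hcsc
  choose F₁ dF₁ rF₁ using hB
  have htight := (Vlim_tight_p htrans hround hlbi hpV).2 {cs} (by
    simp only [Finset.coe_singleton, Set.singleton_subset_iff]
    exact ⟨hcsV, htrans hcsc hcp⟩)
  apply htight
  have hHp : ∀ h ∈ ↑(G.attach.biUnion fun x => F₁ x.1 x.2), prec h p := by
    intro h hh
    obtain ⟨x, -, hx⟩ := Finset.mem_biUnion.1 (Finset.mem_coe.1 hh)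
    obtain ⟨y, hy, hhy⟩ := rF₁ x.1 x.2 h (Finset.mem_coe.2 hx)
    exact htrans hhy (htrans hy.2 hcp)
  refine ⟨G.attach.biUnion (fun x => F₁ x.1 x.2), hHp, ?_, ?_⟩
  · rintro q ⟨hqp, h₀, hh₀, hqh₀⟩
    have hq_cs : prec q cs := htrans hqh₀ (hh₀.2 cs (by simp))
    have hqIn : q ∈ blwIn prec (dnSet prec t) (hatMeetIn prec (dnSet prec t) ↑F) := by
      refine ⟨htrans hq_cs (htrans hcsc hct), cs,
        ⟨htrans hcsc hct, fun u hu => hcsF u (Finset.mem_coe.1 hu)⟩, hq_cs⟩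
    obtain ⟨r, ⟨hrt, g', hg'G, hrg'⟩, hrq⟩ := dG q hqIn
    obtain ⟨r', hr'⟩ := hround r
    have hg'G' : g' ∈ G := Finset.mem_coe.1 hg'G
    have hr'b : r' ∈ blwSet prec (dnSet prec g' ∩ dnSet prec cs) :=
      ⟨r, ⟨hrg', htrans hrq hq_cs⟩, hr'⟩
    obtain ⟨s, hs, hsr'⟩ := dF₁ g' hg'G' r' hr'b
    obtain ⟨h2, hh2, hsh2⟩ := hs
    have hh2H : h2 ∈ ↑(G.attach.biUnion fun x => F₁ x.1 x.2) :=
      Finset.mem_coe.2 (Finset.mem_biUnion.2 ⟨⟨g', hg'G'⟩, Finset.mem_attach _ _,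
        Finset.mem_coe.1 hh2⟩)
    exact ⟨s, ⟨htrans hsh2 (hHp h2 hh2H), h2, hh2H, hsh2⟩, htrans (htrans hsr' hr') hrq⟩
  · intro h hh
    obtain ⟨x, -, hx⟩ := Finset.mem_biUnion.1 (Finset.mem_coe.1 hh)
    obtain ⟨y, hy, hhy⟩ := rF₁ x.1 x.2 h (Finset.mem_coe.2 hx)
    refine ⟨y, ⟨htrans hy.2 hcp, ?_⟩, hhy⟩
    rintro ⟨hyV, -⟩
    exact hzmV x.1 x.2 (Vlim_up htrans hyV hy.1)

/-- The limit stays inside the compact block `K`. -/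
lemma Vlim_not_cov (htrans : Transitive prec) (hround : isRound prec) (hlbi : localBi prec)
    {𝔘 : Ultrafilter (LSpec prec)} {p c₀ c₂ : P} (hc₀p : prec c₀ p)
    (hJK : Jset prec c₀ c₂ ∈ 𝔘) :
    ¬ cCov prec (dnSet prec c₂) (dnSet prec c₀ \ Vlim prec 𝔘 p) := by
  classical
  intro hcc
  obtain ⟨H0, dH0, rH0⟩ := hcc
  set Z : Set P := dnSet prec c₀ \ Vlim prec 𝔘 p with hZdef
  set zm : P → P := pick prec Z with hzmdef
  have hzm1 : ∀ h ∈ H0, prec h (zm h) := fun h hh => (pick_spec (rH0 h hh)).2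
  have hzmc : ∀ h ∈ H0, prec (zm h) c₀ := fun h hh => (pick_spec (rH0 h hh)).1.1
  have hzmV : ∀ h ∈ H0, zm h ∉ Vlim prec 𝔘 p := fun h hh => (pick_spec (rH0 h hh)).1.2
  have hCh : ∀ h, h ∈ H0 → ∃ C ∈ 𝔘, ∀ W ∈ C,
      cCov prec (dnSet prec h) {z' | prec z' (zm h) ∧ z' ∉ (W : LSpec prec).1} := by
    intro h hh
    have hzp : prec (zm h) p := htrans (hzmc h hh) hc₀p
    have hsub : dnSet prec (zm h) ⊆ dnSet prec p := fun y hy => htrans hy hzp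
    have hF₁ := hlbi p (zm h) (zm h) h h hsub hsub (hzm1 h hh) (hzm1 h hh)
    rw [Set.inter_self, Set.inter_self] at hF₁
    obtain ⟨F₁, dF₁, rF₁⟩ := hF₁
    set xm : P → P := pick prec (dnSet prec (zm h)) with hxmdef
    have hxm1 : ∀ f ∈ F₁, prec f (xm f) := fun f hf => (pick_spec (rF₁ f hf)).2
    have hxm2 : ∀ f ∈ F₁, prec (xm f) (zm h) := fun f hf => (pick_spec (rF₁ f hf)).1
    rcases alpha htrans hround hlbi 𝔘 p F₁ xm hxm1
        (fun f hf => htrans (hxm2 f hf) hzp) with ⟨f, hf, hcert⟩ | ⟨C, hC, hCp⟩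
    · exact absurd (Vlim_of_VCERT' htrans hcert (htrans (hxm2 f hf) hzp) (hxm2 f hf))
        (hzmV h hh)
    · refine ⟨C, hC, fun W hW => ?_⟩
      apply cCov_compose htrans hround F₁ dF₁
      intro f hf
      exact ⟨{z' | prec z' (xm f) ∧ z' ∉ W.1}, hCp W hW f hf,
        fun z' hz' => ⟨htrans hz'.1 (hxm2 f hf), hz'.2⟩⟩
  choose Ch hChmem hChprop using hCh
  have hbig : (Jset prec c₀ c₂ ∩ ⋂ x ∈ H0.attach, Ch x.1 x.2) ∈ 𝔘 :=
    Filter.inter_mem hJK ((Filter.biInter_finset_mem _).2 (fun x _ => hChmem x.1 x.2))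
  obtain ⟨W, hWJ, hWC⟩ := Ultrafilter.nonempty_of_mem hbig
  apply hWJ
  apply cCov_compose htrans hround H0 dH0
  intro h hh
  refine ⟨{z' | prec z' (zm h) ∧ z' ∉ W.1},
    hChprop h hh W (Set.mem_iInter₂.1 hWC ⟨h, hh⟩ (Finset.mem_attach _ _)), ?_⟩
  rintro z' ⟨h1, h2⟩
  exact ⟨htrans h1 (hzmc h hh), h2⟩

/-- The ultrafilter converges to its limit. -/
lemma Vlim_converge (htrans : Transitive prec) (hround : isRound prec) (hlbi : localBi prec)
    {𝔘 : Ultrafilter (LSpec prec)} {p : P}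
    (Vpt : LSpec prec) (hVpt : Vpt.1 = Vlim prec 𝔘 p) : ↑𝔘 ≤ nhds Vpt := by
  classical
  rw [le_nhds_iff]
  intro s hVs hso
  have hso' : TopologicalSpace.GenerateOpen
      {O | ∃ (q : P) (R : Set P), cCov prec R {q} ∧ O = Obasic prec q R} s := hso
  clear hso
  induction hso' with
  | @basic O hO =>
      obtain ⟨q, R, hRq, rfl⟩ := hO
      obtain ⟨hqV0, hcov⟩ := hVs
      rw [hVpt] at hqV0 hcov
      obtain ⟨H, dH, rH⟩ := hcov
      set Z : Set P := dnSet prec q \ Vlim prec 𝔘 p with hZdef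
      set zm : P → P := pick prec Z with hzmdef
      have hzm1 : ∀ h ∈ H, prec h (zm h) := fun h hh => (pick_spec (rH h hh)).2
      have hzmq : ∀ h ∈ H, prec (zm h) q := fun h hh => (pick_spec (rH h hh)).1.1
      have hzmV : ∀ h ∈ H, zm h ∉ Vlim prec 𝔘 p := fun h hh => (pick_spec (rH h hh)).1.2
      have hB : ∀ h, h ∈ H → ∃ F₂ : Finset P, dCov prec (dnSet prec h) ↑F₂ ∧
          ∃ B ∈ 𝔘, ∀ W ∈ B, refines prec ↑F₂ (dnSet prec q \ (W : LSpec prec).1) := by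
        intro h hh
        have hsub : dnSet prec (zm h) ⊆ dnSet prec q := fun y hy => htrans hy (hzmq h hh)
        have hF₂ := hlbi q (zm h) (zm h) h h hsub hsub (hzm1 h hh) (hzm1 h hh)
        rw [Set.inter_self, Set.inter_self] at hF₂
        obtain ⟨F₂, dF₂, rF₂⟩ := hF₂
        set xm : P → P := pick prec (dnSet prec (zm h)) with hxmdef
        have hxm1 : ∀ f ∈ F₂, prec f (xm f) := fun f hf => (pick_spec (rF₂ f hf)).2
        have hxm2 : ∀ f ∈ F₂, prec (xm f) (zm h) := fun f hf => (pick_spec (rF₂ f hf)).1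
        have hnot : ∀ f ∈ F₂, {W : LSpec prec | xm f ∈ W.1} ∉ 𝔘 := by
          intro f hf hmem
          exact hzmV h hh (mem_lim htrans hround hlbi hqV0 (hxm2 f hf) (hzmq h hh) hmem)
        refine ⟨F₂, dF₂, ⋂ f ∈ F₂.attach, {W : LSpec prec | xm f.1 ∈ W.1}ᶜ, ?_, ?_⟩
        · exact (Filter.biInter_finset_mem _).2
            (fun f _ => Ultrafilter.compl_mem_iff_notMem.2 (hnot f.1 f.2))
        · intro W hW f hfm
          have hf : f ∈ F₂ := Finset.mem_coe.1 hfm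
          have hWf : W ∈ {W : LSpec prec | xm f ∈ W.1}ᶜ :=
            Set.mem_iInter₂.1 hW ⟨f, hf⟩ (Finset.mem_attach _ _)
          exact ⟨xm f, ⟨htrans (hxm2 f hf) (hzmq h hh), hWf⟩, hxm1 f hf⟩
      choose F₂ dF₂ B hBmem hBprop using hB
      have hqcert := hqV0
      obtain ⟨mq, wq, gq, hgwq, hwmq, hmqq, -, hJq⟩ := hqcert
      have hbig : (Jset prec mq gq ∩ ⋂ x ∈ H.attach, B x.1 x.2) ∈ 𝔘 :=
        Filter.inter_mem hJq ((Filter.biInter_finset_mem _).2 (fun x _ => hBmem x.1 x.2))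
      refine Filter.mem_of_superset hbig ?_
      rintro W ⟨hWJ, hWB⟩
      obtain ⟨y, hy, hyw⟩ := key_mem htrans hlbi hgwq hwmq hWJ
      have hqW : q ∈ W.1 := filt_up_s11 W.2.2.1 hy (htrans hyw (htrans hwmq hmqq))
      refine ⟨hqW, ?_⟩
      refine ⟨H.attach.biUnion (fun x => F₂ x.1 x.2), ?_, ?_⟩
      · intro q₀ hq₀
        obtain ⟨r, hr, hrq₀⟩ := dH q₀ hq₀
        obtain ⟨h, hhH, hrh⟩ := hr
        obtain ⟨r', hr'⟩ := hround r
        have hhH' : h ∈ H := Finset.mem_coe.1 hhH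
        obtain ⟨s2, hs2, hs2r'⟩ := dF₂ h hhH' r' ⟨r, hrh, hr'⟩
        obtain ⟨h2, hh2, hs2h2⟩ := hs2
        refine ⟨s2, ⟨h2, ?_, hs2h2⟩, htrans (htrans hs2r' hr') hrq₀⟩
        exact Finset.mem_coe.2 (Finset.mem_biUnion.2 ⟨⟨h, hhH'⟩, Finset.mem_attach _ _,
          Finset.mem_coe.1 hh2⟩)
      · intro f hf
        obtain ⟨x, -, hx⟩ := Finset.mem_biUnion.1 (Finset.mem_coe.1 hf)
        exact hBprop x.1 x.2 W (Set.mem_iInter₂.1 hWB x (Finset.mem_attach _ _)) f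
          (Finset.mem_coe.2 hx)
  | univ => exact Filter.univ_mem
  | inter s t hs ht ihs iht => exact Filter.inter_mem (ihs hVs.1) (iht hVs.2)
  | sUnion S hS ih =>
      obtain ⟨O, hOS, hVO⟩ := hVs
      exact Filter.mem_of_superset (ih O hOS hVO) (Set.subset_sUnion_of_mem hOS)

/-- The compact block. -/
lemma K_isCompact (htrans : Transitive prec) (hround : isRound prec) (hlbi : localBi prec)
    (p c₀ c₁ c₂ : P) (h10 : prec c₁ c₀) (h21 : prec c₂ c₁) (h0p : prec c₀ p) :
    IsCompact {W : LSpec prec | p ∈ W.1 ∧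
      ¬ cCov prec (dnSet prec c₂) (dnSet prec c₀ \ W.1)} := by
  rw [isCompact_iff_ultrafilter_le_nhds]
  intro 𝔘 hle
  have hK : {W : LSpec prec | p ∈ W.1 ∧
      ¬ cCov prec (dnSet prec c₂) (dnSet prec c₀ \ W.1)} ∈ 𝔘 := Filter.le_principal_iff.1 hle
  have hJK : Jset prec c₀ c₂ ∈ 𝔘 := Filter.mem_of_superset hK (fun W hW => hW.2)
  have hpV : p ∈ Vlim prec 𝔘 p := ⟨c₀, c₁, c₂, h21, h10, h0p, h0p, hJK⟩
  refine ⟨⟨Vlim prec 𝔘 p, ⟨p, hpV⟩, Vlim_isFilt htrans hround hlbi,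
    Vlim_locallyTight htrans hround hlbi hpV⟩,
    ⟨hpV, Vlim_not_cov htrans hround hlbi h0p hJK⟩, ?_⟩
  exact Vlim_converge htrans hround hlbi _ rfl

/-- Membership forcing into the compact block: the interior step. -/
lemma K_interior (htrans : Transitive prec) {c₀ c₁ c₂ c₃ : P} {W : LSpec prec}
    (hc₃W : c₃ ∈ W.1) (h32 : prec c₃ c₂) (h21 : prec c₂ c₁) (h10 : prec c₁ c₀) :
    ¬ cCov prec (dnSet prec c₂) (dnSet prec c₀ \ W.1) := by
  intro hcc
  obtain ⟨H, dH, rH⟩ := hcc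
  have hc₀W : c₀ ∈ W.1 := filt_up_s11 W.2.2.1 hc₃W (htrans h32 (htrans h21 h10))
  have hsub : (↑({c₃} : Finset P) : Set P) ⊆ W.1 ∩ dnSet prec c₀ := by
    simp only [Finset.coe_singleton, Set.singleton_subset_iff]
    exact ⟨hc₃W, htrans h32 (htrans h21 h10)⟩
  have ht := (W.2.2.2 c₀ hc₀W).2 {c₃} hsub
  apply ht
  have hHc₀ : ∀ h ∈ ↑H, prec h c₀ := by
    intro h hh
    obtain ⟨z, hz, hhz⟩ := rH h hh
    exact htrans hhz hz.1
  refine ⟨H, hHc₀, ?_, ?_⟩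
  · rintro q ⟨hqc₀, h₀, hh₀, hqh₀⟩
    have hq3 : prec q c₃ := htrans hqh₀ (hh₀.2 c₃ (by simp))
    have hqb : q ∈ blwSet prec (dnSet prec c₂) := ⟨c₃, h32, hq3⟩
    obtain ⟨r, ⟨h2, hh2, hrh2⟩, hrq⟩ := dH q hqb
    exact ⟨r, ⟨htrans hrh2 (hHc₀ h2 hh2), h2, hh2, hrh2⟩, hrq⟩
  · intro f hf
    obtain ⟨z, hz, hfz⟩ := rH f hf
    exact ⟨z, ⟨hz.1, fun hm => hz.2 hm.1⟩, hfz⟩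

/-- Hausdorff separation inside `O^p`. -/
lemma sep_lemma (htrans : Transitive prec) (hround : isRound prec) (hlbi : localBi prec)
    {T U : LSpec prec} {p t : P}
    (hpT : p ∈ T.1) (hpU : p ∈ U.1) (htT : t ∈ T.1) (htU : t ∉ U.1) :
    ∃ OT OU : Set (LSpec prec), IsOpen OT ∧ IsOpen OU ∧ T ∈ OT ∧ U ∈ OU ∧
      ∀ V : LSpec prec, p ∈ V.1 → V ∈ OT → V ∈ OU → False := by
  classical
  obtain ⟨r₀, hr₀T, hr₀t, hr₀p⟩ := filt_pair T.2.2.1 htT hpT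
  obtain ⟨r₁, hr₁T, hr₁r₀, -⟩ := filt_pair T.2.2.1 hr₀T hr₀T
  obtain ⟨s₀, hs₀U, hs₀p, -⟩ := filt_pair U.2.2.1 hpU hpU
  obtain ⟨s₁, hs₁U, hs₁s₀, -⟩ := filt_pair U.2.2.1 hs₀U hs₀U
  obtain ⟨Fs, dFs, rFs⟩ := hlbi p r₀ s₀ r₁ s₁ (fun y hy => htrans hy hr₀p)
    (fun y hy => htrans hy hs₀p) hr₁r₀ hs₁s₀
  have hcovRp : cCov prec (dnSet prec r₁ ∩ dnSet prec s₁) {p} := by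
    refine ⟨Fs, dFs, ?_⟩
    intro f hf
    obtain ⟨y, hy, hfy⟩ := rFs f hf
    exact ⟨p, rfl, htrans hfy (htrans hy.1 hr₀p)⟩
  refine ⟨Obasic prec r₁ ∅, Obasic prec s₁ ∅ ∩ Obasic prec p (dnSet prec r₁ ∩ dnSet prec s₁),
    isOpen_Obasic (cCov_empty _), (isOpen_Obasic (cCov_empty _)).inter (isOpen_Obasic hcovRp),
    ⟨hr₁T, cCov_empty _⟩, ⟨⟨hs₁U, cCov_empty _⟩, hpU, ?_⟩, ?_⟩
  · refine ⟨Fs, dFs, ?_⟩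
    intro f hf
    obtain ⟨y, hy, hfy⟩ := rFs f hf
    refine ⟨y, ⟨htrans hy.1 hr₀p, ?_⟩, hfy⟩
    intro hyU
    exact htU (filt_up_s11 U.2.2.1 hyU (htrans hy.1 hr₀t))
  · rintro V hpV ⟨hr₁V, -⟩ ⟨⟨hs₁V, -⟩, -, hcov⟩
    have hsub : (↑({r₁, s₁} : Finset P) : Set P) ⊆ V.1 ∩ dnSet prec p := by
      intro x hx
      simp only [Finset.coe_insert, Finset.coe_singleton, Set.mem_insert_iff,
        Set.mem_singleton_iff] at hx
      rcases hx with rfl | rfl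
      · exact ⟨hr₁V, htrans hr₁r₀ hr₀p⟩
      · exact ⟨hs₁V, htrans hs₁s₀ hs₀p⟩
    have ht := (V.2.2.2 p hpV).2 {r₁, s₁} hsub
    apply ht
    obtain ⟨H, dH, rH⟩ := hcov
    have hHp : ∀ h ∈ ↑H, prec h p := by
      intro h hh
      obtain ⟨z, hz, hhz⟩ := rH h hh
      exact htrans hhz hz.1
    refine ⟨H, hHp, ?_, ?_⟩
    · rintro q ⟨hqp, h₀, hh₀, hqh₀⟩
      have h1 : prec h₀ r₁ := hh₀.2 r₁ (by simp)
      have h2 : prec h₀ s₁ := hh₀.2 s₁ (by simp)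
      have hqb : q ∈ blwSet prec (dnSet prec r₁ ∩ dnSet prec s₁) := ⟨h₀, ⟨h1, h2⟩, hqh₀⟩
      obtain ⟨r, ⟨h2', hh2', hrh2'⟩, hrq⟩ := dH q hqb
      exact ⟨r, ⟨htrans hrh2' (hHp h2' hh2'), h2', hh2', hrh2'⟩, hrq⟩
    · intro f hf
      obtain ⟨z, hz, hfz⟩ := rH f hf
      exact ⟨z, ⟨hz.1, fun hm => hz.2 hm.1⟩, hfz⟩

end Ulimit

/-- Each `O^p` is a Hausdorff subspace of the locally tight
spectrum; consequently the spectrum is locally compact and locally Hausdorff. -/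
theorem LSpec_locallyCompact_locallyHausdorff (prec : P → P → Prop)
    (htrans : Transitive prec) (hround : isRound prec) (hlbi : localBi prec) :
    (∀ p : P, T2Space ({T : LSpec prec | p ∈ T.1} : Set (LSpec prec))) ∧
    LocallyCompactSpace (LSpec prec) ∧
    (∀ U : LSpec prec, ∀ N ∈ nhds U, ∃ M ∈ nhds U, M ⊆ N ∧ T2Space M) := by
  classical
  have part1 : ∀ p : P, T2Space ({T : LSpec prec | p ∈ T.1} : Set (LSpec prec)) := by
    intro p
    refine ⟨fun X Y hXY => ?_⟩
    have hX : p ∈ X.1.1 := X.2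
    have hY : p ∈ Y.1.1 := Y.2
    have hne : X.1.1 ≠ Y.1.1 := fun h => hXY (Subtype.ext (Subtype.ext h))
    have hdiff : (∃ t, t ∈ X.1.1 ∧ t ∉ Y.1.1) ∨ (∃ t, t ∈ Y.1.1 ∧ t ∉ X.1.1) := by
      by_contra hcon
      push_neg at hcon
      exact hne (Set.Subset.antisymm hcon.1 hcon.2)
    rcases hdiff with ⟨t, htX, htY⟩ | ⟨t, htY, htX⟩
    · obtain ⟨OT, OU, hoT, hoU, hTm, hUm, hdisj⟩ := sep_lemma htrans hround hlbi hX hY htX htY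
      refine ⟨Subtype.val ⁻¹' OT, Subtype.val ⁻¹' OU, hoT.preimage continuous_subtype_val,
        hoU.preimage continuous_subtype_val, hTm, hUm, ?_⟩
      rw [Set.disjoint_left]
      intro V hV1 hV2
      exact hdisj V.1 V.2 hV1 hV2
    · obtain ⟨OT, OU, hoT, hoU, hTm, hUm, hdisj⟩ := sep_lemma htrans hround hlbi hY hX htY htX
      refine ⟨Subtype.val ⁻¹' OU, Subtype.val ⁻¹' OT, hoU.preimage continuous_subtype_val,
        hoT.preimage continuous_subtype_val, hUm, hTm, ?_⟩
      rw [Set.disjoint_left]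
      intro V hV1 hV2
      exact hdisj V.1 V.2 hV2 hV1
  have part2 : LocallyCompactSpace (LSpec prec) := by
    refine ⟨fun T N hN => ?_⟩
    obtain ⟨p, hp⟩ := T.2.1
    obtain ⟨c₀, hc₀T, hc₀p, -⟩ := filt_pair T.2.2.1 hp hp
    obtain ⟨c₁, hc₁T, hc₁c₀, -⟩ := filt_pair T.2.2.1 hc₀T hc₀T
    obtain ⟨c₂, hc₂T, hc₂c₁, -⟩ := filt_pair T.2.2.1 hc₁T hc₁T
    obtain ⟨c₃, hc₃T, hc₃c₂, -⟩ := filt_pair T.2.2.1 hc₂T hc₂T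
    set K : Set (LSpec prec) := {W | p ∈ W.1 ∧
      ¬ cCov prec (dnSet prec c₂) (dnSet prec c₀ \ W.1)} with hKdef
    have hKcomp : IsCompact K := K_isCompact htrans hround hlbi p c₀ c₁ c₂ hc₁c₀ hc₂c₁ hc₀p
    have hOsub : ({T' : LSpec prec | p ∈ T'.1} ∩ {T' : LSpec prec | c₃ ∈ T'.1}) ⊆ K := by
      rintro W ⟨hWp, hWc₃⟩
      exact ⟨hWp, K_interior htrans hWc₃ hc₃c₂ hc₂c₁ hc₁c₀⟩
    have hTint : T ∈ interior K := by
      rw [mem_interior]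
      exact ⟨_, hOsub, (isOpen_memSet p).inter (isOpen_memSet c₃), ⟨hp, hc₃T⟩⟩
    have hTK : T ∈ K := interior_subset hTint
    have hKS : K ⊆ {T' : LSpec prec | p ∈ T'.1} := fun W hW => hW.1
    haveI hT2S : T2Space ({T' : LSpec prec | p ∈ T'.1} : Set (LSpec prec)) := part1 p
    haveI hT2K : T2Space K := (Topology.IsEmbedding.inclusion hKS).t2Space
    haveI : CompactSpace K := isCompact_iff_compactSpace.1 hKcomp
    haveI : LocallyCompactSpace K := inferInstance
    have hN' : (Subtype.val ⁻¹' (N ∩ interior K) : Set K) ∈ nhds (⟨T, hTK⟩ : K) := by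
      rw [nhds_subtype_eq_comap]
      exact Filter.preimage_mem_comap (Filter.inter_mem hN (isOpen_interior.mem_nhds hTint))
    obtain ⟨M', hM'n, hM's, hM'c⟩ :=
      LocallyCompactSpace.local_compact_nhds (⟨T, hTK⟩ : K) _ hN'
    refine ⟨Subtype.val '' M', ?_, ?_, hM'c.image continuous_subtype_val⟩
    · rw [nhds_subtype_eq_comap] at hM'n
      obtain ⟨A, hA, hAs⟩ := Filter.mem_comap.1 hM'n
      refine Filter.mem_of_superset (Filter.inter_mem hA (isOpen_interior.mem_nhds hTint)) ?_
      rintro x ⟨hxA, hxI⟩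
      exact ⟨⟨x, interior_subset hxI⟩, hAs hxA, rfl⟩
    · rintro x ⟨y, hy, rfl⟩
      exact (hM's hy).1
  have part3 : ∀ U : LSpec prec, ∀ N ∈ nhds U, ∃ M ∈ nhds U, M ⊆ N ∧ T2Space M := by
    intro U N hN
    obtain ⟨q, hq⟩ := U.2.1
    haveI := part1 q
    refine ⟨N ∩ {T' : LSpec prec | q ∈ T'.1},
      Filter.inter_mem hN ((isOpen_memSet q).mem_nhds hq), Set.inter_subset_left, ?_⟩
    exact (Topology.IsEmbedding.inclusion Set.inter_subset_right).t2Space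
  exact ⟨part1, part2, part3⟩
end

section
/- An order $\prec$ makes a groupoid $G$ an ordered groupoid (i.e. $\prec$ is a transitive relation preserving and reflecting the product, inverse, and range formulas) if and only if: (i) $p'\prec p$ and $q'\prec q$ imply $p'q'\prec pq$ whenever the products are defined; (ii) $q\prec p$ implies $q^{-1}\prec p^{-1}$; (iii) $r\prec pp^{-1}$ implies there exists $q\prec p$ with $r=qq^{-1}$. -/
/-- An algebraic groupoid: a type with a partially-defined multiplication
(given by a totalised operation `mul` together with a definedness predicate
`D`) and an inversion, satisfying the usual groupoid axioms.  Here
`p` and `q` are composable iff `s(p) = r(q)`, i.e. `p⁻¹p = qq⁻¹`. -/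
structure AlgGroupoid (G : Type*) where
  mul : G → G → G
  inv : G → G
  D : G → G → Prop
  D_iff : ∀ p q, D p q ↔ mul (inv p) p = mul q (inv q)
  inv_inv : ∀ p, inv (inv p) = p
  assoc : ∀ p q r, D p q → D q r → mul (mul p q) r = mul p (mul q r)
  D_mul_left : ∀ p q r, D p q → D q r → D (mul p q) r
  D_mul_right : ∀ p q r, D p q → D q r → D p (mul q r)
  mul_inv_mul : ∀ p q, D p q → mul (mul p q) (inv q) = p
  inv_mul_mul : ∀ p q, D p q → mul (inv p) (mul p q) = q

variable {G : Type*}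

/-- The source `s(g) = g⁻¹g`. -/
def AlgGroupoid.src (Γ : AlgGroupoid G) (g : G) : G := Γ.mul (Γ.inv g) g

/-- The range `r(g) = gg⁻¹`. -/
def AlgGroupoid.rng (Γ : AlgGroupoid G) (g : G) : G := Γ.mul g (Γ.inv g)

/-- `(G, ≺)` is an ordered groupoid: `≺` is transitive, preserves products and
inverses, and every `r ≺ pp⁻¹` is of the form `qq⁻¹` for some `q ≺ p`. -/
def IsOrderedGroupoid (Γ : AlgGroupoid G) (prec : G → G → Prop) : Prop :=
  Transitive prec ∧
  (∀ p p' q q' : G, prec p' p → prec q' q → Γ.D p q → Γ.D p' q' →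
    prec (Γ.mul p' q') (Γ.mul p q)) ∧
  (∀ p q : G, prec q p → prec (Γ.inv q) (Γ.inv p)) ∧
  (∀ p r : G, prec r (Γ.rng p) → ∃ q, prec q p ∧ r = Γ.rng q)


namespace AlgGroupoid

variable (Γ : AlgGroupoid G)

lemma D_self_inv (p : G) : Γ.D p (Γ.inv p) := by
  rw [Γ.D_iff, Γ.inv_inv]

lemma D_inv_self (p : G) : Γ.D (Γ.inv p) p := by
  rw [Γ.D_iff, Γ.inv_inv]

lemma D_inv_inv {p q : G} (h : Γ.D p q) : Γ.D (Γ.inv q) (Γ.inv p) := by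
  rw [Γ.D_iff] at h
  rw [Γ.D_iff, Γ.inv_inv, Γ.inv_inv, h]

lemma D_inv_rng (p : G) : Γ.D (Γ.inv p) (Γ.rng p) :=
  Γ.D_mul_right _ _ _ (Γ.D_inv_self p) (Γ.D_self_inv p)

lemma D_rng_self (p : G) : Γ.D (Γ.rng p) p :=
  Γ.D_mul_left _ _ _ (Γ.D_self_inv p) (Γ.D_inv_self p)

lemma D_rng_rng (p : G) : Γ.D (Γ.rng p) (Γ.rng p) :=
  Γ.D_mul_right _ _ _ (Γ.D_rng_self p) (Γ.D_self_inv p)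

lemma rng_mul_self (p : G) : Γ.mul (Γ.rng p) p = p := by
  have := Γ.mul_inv_mul p (Γ.inv p) (Γ.D_self_inv p)
  rwa [Γ.inv_inv] at this

lemma rng_mul_rng (p : G) : Γ.mul (Γ.rng p) (Γ.rng p) = Γ.rng p := by
  have h := Γ.assoc (Γ.rng p) p (Γ.inv p) (Γ.D_rng_self p) (Γ.D_self_inv p)
  rw [Γ.rng_mul_self p] at h
  exact h.symm

lemma inv_mul_rng (p : G) : Γ.mul (Γ.inv (Γ.rng p)) (Γ.rng p) = Γ.rng p := by
  have h := Γ.inv_mul_mul (Γ.rng p) (Γ.rng p) (Γ.D_rng_rng p)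
  rwa [Γ.rng_mul_rng p] at h

lemma inv_rng (p : G) : Γ.inv (Γ.rng p) = Γ.rng p := by
  have h1 := Γ.mul_inv_mul (Γ.inv (Γ.rng p)) (Γ.rng p) (Γ.D_inv_self _)
  -- (rng p ⁻¹ * rng p) * (rng p)⁻¹ = (rng p)⁻¹
  rw [Γ.inv_mul_rng p] at h1
  -- rng p * (rng p)⁻¹ = (rng p)⁻¹
  have h2 := Γ.mul_inv_mul (Γ.rng p) (Γ.rng p) (Γ.D_rng_rng p)
  rw [Γ.rng_mul_rng p] at h2
  -- rng p * (rng p)⁻¹ = rng p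
  rw [← h1, h2]

lemma inv_mul {p q : G} (h : Γ.D p q) :
    Γ.inv (Γ.mul p q) = Γ.mul (Γ.inv q) (Γ.inv p) := by
  set m := Γ.mul p q with hm
  set n := Γ.mul (Γ.inv q) (Γ.inv p) with hn
  have hDqp : Γ.D (Γ.inv q) (Γ.inv p) := Γ.D_inv_inv h
  have hDmq : Γ.D m (Γ.inv q) := Γ.D_mul_left p q (Γ.inv q) h (Γ.D_self_inv q)
  have hDmn : Γ.D m n := Γ.D_mul_right m (Γ.inv q) (Γ.inv p) hDmq hDqp
  have hmn : Γ.mul m n = Γ.rng p := by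
    rw [hn, ← Γ.assoc m (Γ.inv q) (Γ.inv p) hDmq hDqp, hm,
      Γ.mul_inv_mul p q h]
    rfl
  -- n = m⁻¹ * (m * n) = m⁻¹ * rng p
  have hn1 : n = Γ.mul (Γ.inv m) (Γ.rng p) := by
    rw [← hmn, Γ.inv_mul_mul m n hDmn]
  have hDmi : Γ.D (Γ.inv m) (Γ.rng p) := by
    have := Γ.D_mul_right (Γ.inv m) m n (Γ.D_inv_self m) hDmn
    rwa [hmn] at this
  -- n * rng p = n  (since  n = q⁻¹ p⁻¹,  p⁻¹ * rng p = p⁻¹)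
  have hprng : Γ.mul (Γ.inv p) (Γ.rng p) = Γ.inv p :=
    Γ.inv_mul_mul p (Γ.inv p) (Γ.D_self_inv p)
  have hDprng : Γ.D (Γ.inv p) (Γ.rng p) := Γ.D_inv_rng p
  have hne : Γ.mul n (Γ.rng p) = n := by
    rw [hn, Γ.assoc (Γ.inv q) (Γ.inv p) (Γ.rng p) hDqp hDprng, hprng]
  -- m⁻¹ = (m⁻¹ * rng p) * (rng p)⁻¹ = n * rng p = n
  have h3 := Γ.mul_inv_mul (Γ.inv m) (Γ.rng p) hDmi
  rw [← hn1, Γ.inv_rng p, hne] at h3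
  exact h3.symm

lemma rng_mul {p q : G} (h : Γ.D p q) : Γ.rng (Γ.mul p q) = Γ.rng p := by
  unfold rng
  rw [Γ.inv_mul h, ← Γ.assoc (Γ.mul p q) (Γ.inv q) (Γ.inv p)
    (Γ.D_mul_left p q (Γ.inv q) h (Γ.D_self_inv q)) (Γ.D_inv_inv h),
    Γ.mul_inv_mul p q h]

lemma D_inv_mul' {p q : G} (h : Γ.D p q) : Γ.D (Γ.inv p) (Γ.mul p q) :=
  Γ.D_mul_right (Γ.inv p) p q (Γ.D_inv_self p) h

end AlgGroupoid

/-- A transitive relation makes a groupoid an ordered groupoid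
(preserving and reflecting products, inverses and ranges) iff it preserves
products and inverses and reflects ranges. -/
theorem orderedGroupoid_iff (Γ : AlgGroupoid G) (prec : G → G → Prop)
    (htrans : Transitive prec) :
    ((∀ p q r : G, Γ.D p q →
        (prec r (Γ.mul p q) ↔
          ∃ p' q', prec p' p ∧ prec q' q ∧ Γ.D p' q' ∧ r = Γ.mul p' q')) ∧
     (∀ p r : G, prec r (Γ.inv p) ↔ ∃ q, prec q p ∧ r = Γ.inv q) ∧
     (∀ p r : G, prec r (Γ.rng p) ↔ ∃ q, prec q p ∧ r = Γ.rng q)) ↔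
    ((∀ p p' q q' : G, prec p' p → prec q' q → Γ.D p q → Γ.D p' q' →
        prec (Γ.mul p' q') (Γ.mul p q)) ∧
     (∀ p q : G, prec q p → prec (Γ.inv q) (Γ.inv p)) ∧
     (∀ p r : G, prec r (Γ.rng p) → ∃ q, prec q p ∧ r = Γ.rng q)) := by
  constructor
  · rintro ⟨hA, hB, hC⟩
    refine ⟨?_, ?_, fun p r h => (hC p r).1 h⟩
    · intro p p' q q' hp hq hD hD'
      exact (hA p q _ hD).2 ⟨p', q', hp, hq, hD', rfl⟩
    · intro p q h
      exact (hB p _).2 ⟨q, h, rfl⟩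
  · rintro ⟨hmul, hinv, hrng⟩
    refine ⟨?_, ?_, ?_⟩
    · intro p q r hD
      constructor
      · intro hr
        -- rng r ≺ rng (pq) = rng p
        have h1 : prec (Γ.rng r) (Γ.rng (Γ.mul p q)) :=
          hmul _ _ _ _ hr (hinv _ _ hr) (Γ.D_self_inv _) (Γ.D_self_inv _)
        rw [Γ.rng_mul hD] at h1
        obtain ⟨p', hp', hrp'⟩ := hrng p _ h1
        have hDp'r : Γ.D (Γ.inv p') r := by
          rw [Γ.D_iff, Γ.inv_inv]
          exact hrp'.symm
        refine ⟨p', Γ.mul (Γ.inv p') r, hp', ?_, ?_, ?_⟩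
        · -- p'⁻¹ r ≺ p⁻¹ (pq) = q
          have h2 : prec (Γ.mul (Γ.inv p') r) (Γ.mul (Γ.inv p) (Γ.mul p q)) :=
            hmul _ _ _ _ (hinv _ _ hp') hr (Γ.D_inv_mul' hD) hDp'r
          rwa [Γ.inv_mul_mul p q hD] at h2
        · exact Γ.D_mul_right p' (Γ.inv p') r (Γ.D_self_inv p') hDp'r
        · have := Γ.inv_mul_mul (Γ.inv p') r hDp'r
          rw [Γ.inv_inv] at this
          exact this.symm
      · rintro ⟨p', q', hp', hq', hD', rfl⟩
        exact hmul _ _ _ _ hp' hq' hD hD'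
    · intro p r
      constructor
      · intro h
        refine ⟨Γ.inv r, ?_, (Γ.inv_inv r).symm⟩
        have := hinv _ _ h
        rwa [Γ.inv_inv] at this
      · rintro ⟨q, hq, rfl⟩
        exact hinv _ _ hq
    · intro p r
      refine ⟨hrng p r, ?_⟩
      rintro ⟨q, hq, rfl⟩
      exact hmul _ _ _ _ hq (hinv _ _ hq) (Γ.D_self_inv p) (Γ.D_self_inv q)
end

section
/- Let $S$ be an inverse semigroup and $\prec$ a transitive relation on $S$ strengthening the canonical order ($p\prec q\Rightarrow p\leq q$) and preserving products and inverses ($p\prec p', q\prec q'\Rightarrow pq\prec p'q'$ and $p\prec q\Rightarrow p^{-1}\prec q^{-1}$). Then the set $S^\succ=\{p:\exists q,\ p\prec q\}$, with the product restricted to pairs $(p,q)$ satisfying $p^{-1}p=qq^{-1}$, is an ordered groupoid with respect to $\prec$. -/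
variable {G : Type*}

set_option linter.unusedSectionVars false

section
variable {S : Type*} [Semigroup S] (inv : S → S)
  (h1 : ∀ p : S, p * inv p * p = p) (h2 : ∀ p : S, inv p * p * inv p = inv p)
  (huniq : ∀ p q : S, p * q * p = p → q * p * q = q → q = inv p)

include h1 h2 huniq

theorem aux_inv_inv : ∀ p, inv (inv p) = p := fun p => (huniq (inv p) p (h2 p) (h1 p)).symm

theorem aux_idem_inv : ∀ e : S, e*e = e → inv e = e := fun e he =>
  (huniq e e (by rw [he, he]) (by rw [he, he])).symm

theorem aux_comm : ∀ e f : S, e*e = e → f*f = f → e*f = f*e := by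
  intro e f he hf
  set x := inv (e*f) with hxdef
  have he' : ∀ a : S, e*(e*a) = e*a := fun a => by rw [← mul_assoc, he]
  have hf' : ∀ a : S, f*(f*a) = f*a := fun a => by rw [← mul_assoc, hf]
  have hx : x*(e*(f*x)) = x := by
    have := h2 (e*f); rw [← hxdef] at this; simpa [mul_assoc] using this
  have hx' : ∀ a : S, x*(e*(f*(x*a))) = x*a := fun a => by
    have := congrArg (· * a) hx; simpa [mul_assoc] using this
  have hfx : e*(f*(x*(e*f))) = e*f := by
    have := h1 (e*f); rw [← hxdef] at this; simpa [mul_assoc] using this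
  have hfx' : ∀ a : S, e*(f*(x*(e*(f*a)))) = e*(f*a) := fun a => by
    have := congrArg (· * a) hfx; simpa [mul_assoc] using this
  -- step 1 : f*x*e is an inverse of e*f
  have hA : f*(x*e) = x := by
    rw [hxdef]
    apply huniq (e*f) (f*(x*e))
    · simp only [mul_assoc, ← hxdef]
      simp only [hf', he', hfx, hfx']
    · simp only [mul_assoc, ← hxdef]
      simp only [hf', he', hx, hx']
  -- step 2 : x is idempotent
  have hxx : x*x = x := by
    have hB : (f*(x*e))*(f*(x*e)) = f*(x*e) := by
      calc (f*(x*e))*(f*(x*e)) = f*(x*(e*(f*(x*e)))) := by simp [mul_assoc]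
      _ = f*(x*e) := by rw [hx']
    rw [hA] at hB; exact hB
  -- step 3 : e*f = x, idempotent
  have hef : e*f = x := by
    have := aux_idem_inv inv h1 h2 huniq x hxx
    rw [hxdef, aux_inv_inv inv h1 h2 huniq] at this
    rw [hxdef]; exact this
  have hefidem : (e*f)*(e*f) = e*f := by rw [hef, hxx]
  -- symmetric: f*e idempotent
  have hfeidem : (f*e)*(f*e) = f*e := by
    set y := inv (f*e) with hydef
    have hy : y*(f*(e*y)) = y := by
      have := h2 (f*e); rw [← hydef] at this; simpa [mul_assoc] using this
    have hy' : ∀ a : S, y*(f*(e*(y*a))) = y*a := fun a => by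
      have := congrArg (· * a) hy; simpa [mul_assoc] using this
    have hfy : f*(e*(y*(f*e))) = f*e := by
      have := h1 (f*e); rw [← hydef] at this; simpa [mul_assoc] using this
    have hfy' : ∀ a : S, f*(e*(y*(f*(e*a)))) = f*(e*a) := fun a => by
      have := congrArg (· * a) hfy; simpa [mul_assoc] using this
    have hA2 : e*(y*f) = y := by
      rw [hydef]
      apply huniq (f*e) (e*(y*f))
      · simp only [mul_assoc, ← hydef]
        simp only [he', hf', hfy, hfy']
      · simp only [mul_assoc, ← hydef]
        simp only [he', hf', hy, hy']
    have hyy : y*y = y := by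
      have hB : (e*(y*f))*(e*(y*f)) = e*(y*f) := by
        calc (e*(y*f))*(e*(y*f)) = e*(y*(f*(e*(y*f)))) := by simp [mul_assoc]
        _ = e*(y*f) := by rw [hy']
      rw [hA2] at hB; exact hB
    have hfe : f*e = y := by
      have := aux_idem_inv inv h1 h2 huniq y hyy
      rw [hydef, aux_inv_inv inv h1 h2 huniq] at this
      rw [hydef]; exact this
    rw [hfe, hyy]
  -- step 4 : e*f and f*e are mutually inverse, hence equal
  have : f*e = inv (e*f) := by
    apply huniq
    · calc (e*f)*(f*e)*(e*f) = e*(f*(f*(e*(e*f)))) := by simp [mul_assoc]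
      _ = e*(f*(e*f)) := by rw [hf', he']
      _ = (e*f)*(e*f) := by simp [mul_assoc]
      _ = e*f := hefidem
    · calc (f*e)*(e*f)*(f*e) = f*(e*(e*(f*(f*e)))) := by simp [mul_assoc]
      _ = f*(e*(f*e)) := by rw [he', hf']
      _ = (f*e)*(f*e) := by simp [mul_assoc]
      _ = f*e := hfeidem
  rw [this]; exact hef.trans hxdef

theorem aux_idem_src : ∀ p : S, (inv p * p)*(inv p * p) = inv p * p := fun p => by
  calc (inv p * p)*(inv p * p) = (inv p * p * inv p) * p := by simp [mul_assoc]
  _ = inv p * p := by rw [h2]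

theorem aux_idem_rng : ∀ p : S, (p * inv p)*(p * inv p) = p * inv p := fun p => by
  calc (p * inv p)*(p * inv p) = (p * inv p * p) * inv p := by simp [mul_assoc]
  _ = p * inv p := by rw [h1]

theorem aux_inv_mul : ∀ p q : S, inv (p*q) = inv q * inv p := by
  intro p q
  have hc := aux_comm inv h1 h2 huniq (q * inv q) (inv p * p)
    (aux_idem_rng inv h1 h2 huniq q) (aux_idem_src inv h1 h2 huniq p)
  symm; apply huniq
  · calc (p*q)*(inv q * inv p)*(p*q) = p*((q*inv q)*(inv p*p))*q := by simp [mul_assoc]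
    _ = p*((inv p*p)*(q*inv q))*q := by rw [hc]
    _ = (p*inv p*p)*(q*inv q*q) := by simp [mul_assoc]
    _ = p*q := by rw [h1, h1]
  · calc (inv q * inv p)*(p*q)*(inv q * inv p)
        = inv q*((inv p*p)*(q*inv q))*inv p := by simp [mul_assoc]
    _ = inv q*((q*inv q)*(inv p*p))*inv p := by rw [← hc]
    _ = (inv q*q*inv q)*(inv p*p*inv p) := by simp [mul_assoc]
    _ = inv q * inv p := by rw [h2, h2]

end
/-- If `S` is an inverse semigroup and `≺` is a transitive
relation strengthening the canonical order and preserving products and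
inverses, then `S^≻` with the restricted product is an ordered groupoid. -/
theorem inverseSemigroup_orderedGroupoid {S : Type*} [Semigroup S] (inv : S → S)
    (h1 : ∀ p : S, p * inv p * p = p) (h2 : ∀ p : S, inv p * p * inv p = inv p)
    (huniq : ∀ p q : S, p * q * p = p → q * p * q = q → q = inv p)
    (prec : S → S → Prop) (htrans : Transitive prec)
    (hstr : ∀ p q : S, prec p q → p = p * inv p * q)
    (hmul : ∀ p p' q q' : S, prec p p' → prec q q' → prec (p * q) (p' * q'))
    (hinv : ∀ p q : S, prec p q → prec (inv p) (inv q)) :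
    ∃ Γ : AlgGroupoid {p : S // ∃ q, prec p q},
      (∀ a b, Γ.D a b ↔ inv a.1 * a.1 = b.1 * inv b.1) ∧
      (∀ a b, Γ.D a b → (Γ.mul a b).1 = a.1 * b.1) ∧
      (∀ a, (Γ.inv a).1 = inv a.1) ∧
      IsOrderedGroupoid Γ (fun a b => prec a.1 b.1) := by
  have iinv := aux_inv_inv inv h1 h2 huniq
  have icomm := aux_comm inv h1 h2 huniq
  have isrc := aux_idem_src inv h1 h2 huniq
  have irng := aux_idem_rng inv h1 h2 huniq
  have imul := aux_inv_mul inv h1 h2 huniq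
  have iidem := aux_idem_inv inv h1 h2 huniq
  have memmul : ∀ a b : {p : S // ∃ q, prec p q}, ∃ q, prec (a.1*b.1) q := by
    rintro ⟨a, x, hax⟩ ⟨b, y, hby⟩; exact ⟨x*y, hmul _ _ _ _ hax hby⟩
  have meminv : ∀ a : {p : S // ∃ q, prec p q}, ∃ q, prec (inv a.1) q := by
    rintro ⟨a, x, hax⟩; exact ⟨inv x, hinv _ _ hax⟩
  refine ⟨{ mul := fun a b => ⟨a.1*b.1, memmul a b⟩
          , inv := fun a => ⟨inv a.1, meminv a⟩
          , D := fun a b => inv a.1 * a.1 = b.1 * inv b.1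
          , D_iff := fun a b => by simp [Subtype.ext_iff]
          , inv_inv := fun a => Subtype.ext (iinv a.1)
          , assoc := fun a b c _ _ => Subtype.ext (mul_assoc a.1 b.1 c.1)
          , D_mul_left := ?_
          , D_mul_right := ?_
          , mul_inv_mul := ?_
          , inv_mul_mul := ?_ },
      fun a b => Iff.rfl, fun a b _ => rfl, fun a => rfl, ?_, ?_, ?_, ?_⟩
  · -- D_mul_left
    intro a b c hab hbc
    show inv (a.1*b.1) * (a.1*b.1) = c.1 * inv c.1
    calc inv (a.1*b.1) * (a.1*b.1) = inv b.1 * (inv a.1*a.1) * b.1 := by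
          rw [imul]; simp [mul_assoc]
      _ = inv b.1 * (b.1 * inv b.1 * b.1) := by rw [hab]; simp [mul_assoc]
      _ = inv b.1 * b.1 := by rw [h1]
      _ = c.1 * inv c.1 := hbc
  · -- D_mul_right
    intro a b c hab hbc
    show inv a.1 * a.1 = (b.1*c.1) * inv (b.1*c.1)
    calc inv a.1 * a.1 = b.1 * inv b.1 := hab
      _ = b.1 * (inv b.1 * b.1 * inv b.1) := by rw [h2]
      _ = b.1 * (c.1 * inv c.1) * inv b.1 := by rw [hbc]; simp [mul_assoc]
      _ = (b.1*c.1) * inv (b.1*c.1) := by rw [imul]; simp [mul_assoc]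
  · -- mul_inv_mul
    intro a b hab
    apply Subtype.ext
    show a.1*b.1*inv b.1 = a.1
    calc a.1*b.1*inv b.1 = a.1*(b.1*inv b.1) := by rw [mul_assoc]
      _ = a.1*inv a.1*a.1 := by rw [← hab, ← mul_assoc]
      _ = a.1 := h1 a.1
  · -- inv_mul_mul
    intro a b hab
    apply Subtype.ext
    show inv a.1*(a.1*b.1) = b.1
    calc inv a.1*(a.1*b.1) = (inv a.1*a.1)*b.1 := by rw [mul_assoc]
      _ = b.1*inv b.1*b.1 := by rw [hab]
      _ = b.1 := h1 b.1
  · -- transitive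
    exact fun a b c h h' => htrans h h'
  · -- mul preserves prec
    exact fun p p' q q' hp hq _ _ => hmul _ _ _ _ hp hq
  · -- inv preserves prec
    exact fun p q h => hinv _ _ h
  · -- restriction
    intro p r h
    have h' : prec r.1 (p.1 * inv p.1) := h
    obtain ⟨x, hpx⟩ := p.2
    have hq : prec (r.1 * p.1) p.1 := by
      have h3 := hmul r.1 (p.1*inv p.1) p.1 x h' hpx
      have h4 := hstr p.1 x hpx
      rwa [← h4] at h3
    have hre : r.1 = r.1*inv r.1*(p.1*inv p.1) := hstr r.1 (p.1*inv p.1) h'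
    have hid : r.1*r.1 = r.1 := by
      calc r.1*r.1 = (r.1*inv r.1*(p.1*inv p.1))*(r.1*inv r.1*(p.1*inv p.1)) := by
            rw [← hre]
        _ = (r.1*inv r.1)*((p.1*inv p.1)*(r.1*inv r.1))*(p.1*inv p.1) := by
            simp [mul_assoc]
        _ = (r.1*inv r.1)*((r.1*inv r.1)*(p.1*inv p.1))*(p.1*inv p.1) := by
            rw [icomm _ _ (irng p.1) (irng r.1)]
        _ = ((r.1*inv r.1)*(r.1*inv r.1))*((p.1*inv p.1)*(p.1*inv p.1)) := by
            simp [mul_assoc]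
        _ = (r.1*inv r.1)*(p.1*inv p.1) := by rw [irng, irng]
        _ = r.1 := hre.symm
    have hrinv : inv r.1 = r.1 := iidem r.1 hid
    have hrf : r.1*(p.1*inv p.1) = r.1 := by
      calc r.1*(p.1*inv p.1) = (r.1*inv r.1*(p.1*inv p.1))*(p.1*inv p.1) := by rw [← hre]
        _ = r.1*inv r.1*((p.1*inv p.1)*(p.1*inv p.1)) := by simp [mul_assoc]
        _ = r.1*inv r.1*(p.1*inv p.1) := by rw [irng]
        _ = r.1 := hre.symm
    refine ⟨⟨r.1*p.1, p.1, hq⟩, hq, ?_⟩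
    apply Subtype.ext
    show r.1 = (r.1*p.1) * inv (r.1*p.1)
    calc r.1 = r.1 * r.1 := hid.symm
      _ = (r.1*(p.1*inv p.1))*r.1 := by rw [hrf]
      _ = (r.1*p.1)*(inv p.1 * inv r.1) := by rw [hrinv]; simp [mul_assoc]
      _ = (r.1*p.1)*inv (r.1*p.1) := by rw [imul]
end
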